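/- arXiv:2001.03433 — 10 statements merged into one kernel-verified Lean document; each statement's English description precedes it below -/
import Mathlib

section
/- Let s, k, n be positive integers and let G be an s-by-n matrix over F_2 which is a k-PIR generator matrix. Then for every nonzero F_2-linear functional φ on F_2^s (equivalently, for every hyperplane H = ker φ of F_2^s), the number of column indices j ∈ {1,…,n} such that φ applied to the j-th column of G is nonzero is at least k. -/
/-- An `s × n` matrix `G` over `𝔽₂` is a `k`-PIR generator matrix if for every
index `i` there exist `k` pairwise disjoint recovery sets of column indices,
each of whose column sums equals the `i`-th standard unit vector. -/
def IsPIRMatrix (s n k : ℕ) (G : Matrix (Fin s) (Fin n) (ZMod 2)) : Prop :=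
  ∀ i : Fin s, ∃ R : Fin k → Finset (Fin n),
    (∀ j j' : Fin k, j ≠ j' → Disjoint (R j) (R j')) ∧
    ∀ j : Fin k, (∑ h ∈ R j, fun r : Fin s => G r h) = Pi.single i 1

/-- `PIRlen s k` is the smallest positive `n` for which an `s × n` `k`-PIR
generator matrix over `𝔽₂` exists. -/
noncomputable def PIRlen (s k : ℕ) : ℕ :=
  sInf {n : ℕ | 0 < n ∧ ∃ G : Matrix (Fin s) (Fin n) (ZMod 2), IsPIRMatrix s n k G}

theorem test : True := trivial

/-- Hyperplane bound: a `k`-PIR matrix has at least `k` columns outside every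
hyperplane (kernel of a nonzero linear functional) of `𝔽₂ˢ`. -/
theorem stmt_0 (s k n : ℕ) (hs : 0 < s) (hk : 0 < k) (hn : 0 < n)
    (G : Matrix (Fin s) (Fin n) (ZMod 2)) (hG : IsPIRMatrix s n k G)
    (φ : (Fin s → ZMod 2) →ₗ[ZMod 2] ZMod 2) (hφ : φ ≠ 0) :
    k ≤ (Finset.univ.filter fun j : Fin n => φ (fun r : Fin s => G r j) ≠ 0).card := by
  -- find i with φ (Pi.single i 1) ≠ 0
  have hex : ∃ i : Fin s, φ (Pi.single i 1) ≠ 0 := by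
    by_contra h
    push_neg at h
    apply hφ
    apply LinearMap.ext; intro x
    have hx : x = ∑ i : Fin s, x i • Pi.single i (1 : ZMod 2) := by
      ext j
      simp [Pi.single_apply, Finset.sum_apply]
    rw [hx]
    simp [map_sum, h]
  obtain ⟨i, hi⟩ := hex
  obtain ⟨R, hdisj, hsum⟩ := hG i
  -- for each j, pick a column in R j with nonzero φ
  have hpick : ∀ j : Fin k, ∃ h ∈ R j, φ (fun r : Fin s => G r h) ≠ 0 := by
    intro j
    by_contra hcon
    push_neg at hcon
    apply hi
    rw [← hsum j, map_sum]
    exact Finset.sum_eq_zero hcon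
  choose f hfmem hfne using hpick
  have hinj : Function.Injective f := by
    intro a b hab
    by_contra hne
    exact (Finset.disjoint_left.mp (hdisj a b hne)) (hfmem a) (hab ▸ hfmem b)
  calc k = (Finset.univ : Finset (Fin k)).card := by simp
    _ ≤ _ := Finset.card_le_card_of_injOn f
        (fun j _ => Finset.mem_filter.mpr ⟨Finset.mem_univ _, hfne j⟩)
        (hinj.injOn)
end

section
/- Let s, n, k be positive integers, t a nonnegative integer, G an s-by-n matrix over F_2 and r ∈ F_2^n. Let G' be the (s+1)-by-(n+t) matrix over F_2 whose j-th column, for j ≤ n, is the j-th column of G with the entry r_j appended as last coordinate, and whose last t columns each equal the standard unit vector e_{s+1} of F_2^{s+1}. If G' is a k-PIR generator matrix, then G is a k-PIR generator matrix. -/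
/-! Deleting the last row of `G'` keeps the recovery sets of every other index, and the
appended unit columns vanish on the remaining rows, so restricting each recovery set to the
first `n` columns changes none of its column sums. -/

namespace IsPIRMatrix

variable {s s' n m k : ℕ}

theorem submatrix_row {G : Matrix (Fin s) (Fin n) (ZMod 2)} (hG : IsPIRMatrix s n k G)
    {e : Fin s' → Fin s} (he : Function.Injective e) :
    IsPIRMatrix s' n k (G.submatrix e id) := by
  intro i
  obtain ⟨R, hdisj, hsum⟩ := hG (e i)
  refine ⟨R, hdisj, fun j => funext fun a => ?_⟩
  have hrow := congrFun (hsum j) (e a)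
  simp only [Finset.sum_apply, Pi.single_apply, he.eq_iff] at hrow ⊢
  exact hrow

theorem submatrix_col {G : Matrix (Fin s) (Fin m) (ZMod 2)} (hG : IsPIRMatrix s m k G)
    {e : Fin n → Fin m} (he : Function.Injective e)
    (hzero : ∀ h ∉ Set.range e, ∀ a, G a h = 0) :
    IsPIRMatrix s n k (G.submatrix id e) := by
  intro i
  obtain ⟨R, hdisj, hsum⟩ := hG i
  refine ⟨fun j => (R j).preimage e he.injOn,
    fun j j' hjj' => Finset.disjoint_preimage (hdisj j j' hjj'), fun j => ?_⟩
  rw [← hsum j]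
  exact Finset.sum_preimage e (R j) he.injOn (fun h a => G a h)
    fun h _ hh => funext (hzero h hh)

end IsPIRMatrix

theorem stmt_1_general (s n k t : ℕ)
    (G : Matrix (Fin s) (Fin n) (ZMod 2)) (r : Fin n → ZMod 2)
    (G' : Matrix (Fin (s + 1)) (Fin (n + t)) (ZMod 2))
    (hcol : ∀ j : Fin n,
      (fun i : Fin (s + 1) => G' i (Fin.castAdd t j)) =
        Fin.snoc (fun i : Fin s => G i j) (r j))
    (hcol' : ∀ j : Fin t,
      (fun i : Fin (s + 1) => G' i (Fin.natAdd n j)) = Pi.single (Fin.last s) 1)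
    (hG' : IsPIRMatrix (s + 1) (n + t) k G') :
    IsPIRMatrix s n k G := by
  have hG : G = (G'.submatrix Fin.castSucc id).submatrix id (Fin.castAdd t) := by
    ext a j
    simpa using (congrFun (hcol j) a.castSucc).symm
  have hzero : ∀ h ∉ Set.range (Fin.castAdd t), ∀ a, G' (Fin.castSucc a) h = 0 := by
    intro h hh a
    obtain ⟨j, rfl⟩ : ∃ j, Fin.natAdd n j = h := by
      induction h using Fin.addCases with
      | left h => exact absurd ⟨h, rfl⟩ hh
      | right j => exact ⟨j, rfl⟩
    rw [congrFun (hcol' j) a.castSucc, Pi.single_eq_of_ne (Fin.castSucc_lt_last a).ne]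
  rw [hG]
  exact (hG'.submatrix_row (Fin.castSucc_injective s)).submatrix_col
    (Fin.castAdd_injective n t) hzero

/-- If the lengthened matrix `G'` (obtained from `G` by appending the row `r`
and `t` copies of the unit column `e_{s+1}`) is a `k`-PIR generator matrix,
then so is `G`. -/
theorem stmt_1 (s n k t : ℕ) (hs : 0 < s) (hn : 0 < n) (hk : 0 < k)
    (G : Matrix (Fin s) (Fin n) (ZMod 2)) (r : Fin n → ZMod 2)
    (G' : Matrix (Fin (s + 1)) (Fin (n + t)) (ZMod 2))
    (hcol : ∀ j : Fin n,
      (fun i : Fin (s + 1) => G' i (Fin.castAdd t j)) =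
        Fin.snoc (fun i : Fin s => G i j) (r j))
    (hcol' : ∀ j : Fin t,
      (fun i : Fin (s + 1) => G' i (Fin.natAdd n j)) = Pi.single (Fin.last s) 1)
    (hG' : IsPIRMatrix (s + 1) (n + t) k G') :
    IsPIRMatrix s n k G :=
  stmt_1_general s n k t G r G' hcol hcol' hG'
end

section
/- For every integer s ≥ 3 and every integer λ with 0 ≤ λ ≤ (2^{s-1} − 3 − 2·(−1)^s)/3, it holds that P(s, 2^{s-1} − 2λ) ≤ 2^s − 1 − 3λ; that is, there exists an s-by-(2^s − 1 − 3λ) matrix over F_2 that is a (2^{s-1} − 2λ)-PIR generator matrix. -/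
/-!
Let `S` be the union of `λ` pairwise disjoint lines `{a, b, a + b}` inside the even-weight
hyperplane `H` of `𝔽₂^s`, and let the columns of `G` be the nonzero vectors outside `S`, so that
`n = 2^s - 1 - 3λ`. A unit vector `e` has odd weight, so `e ∉ H`, and the sets `{e}`, the translates
`ℓ + e` of the `λ` lines and the pairs `{v, v + e}` with `v ∈ H \ (S ∪ {0})` are disjoint sets of
columns summing to `e`; there are `1 + λ + (2^(s-1) - 1 - 3λ) = 2^(s-1) - 2λ` of them.

Enough lines exist: from lines in `𝔽₂^m` one gets lines in `𝔽₂^(m+2) = 𝔽₂^m × 𝔽₂²` by keeping the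
old ones and adding the `2^m` lines `{(v,1,0), (σ v,0,1), (v + σ v,1,1)}`, where `σ` is
multiplication by an element `α ∉ {0, 1}` of `𝔽_(2^m)`, so that both `σ` and `1 + σ` are
bijective. This gives `(2^m - 3 + 2(-1)^m)/3` lines in `𝔽₂^m ≅ H` for `m = s - 1 ≥ 2`.
-/

open Function

section Lines

variable {W ι : Type*}

def linePoint [Add W] (a b : ι → W) (p : ι × Fin 3) : W :=
  ![a p.1, b p.1, a p.1 + b p.1] p.2

/-- The lines `{a j, b j, a j + b j}` consist of three points each and are pairwise disjoint. -/
def IsLineFamily [Add W] (a b : ι → W) : Prop :=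
  Injective (linePoint a b)

def IsOrthomorphism [Add W] (σ : W → W) : Prop :=
  Injective σ ∧ Injective fun v => v + σ v

theorem linePoint_comp [Add W] {W' F : Type*} [Add W'] [FunLike F W W'] [AddHomClass F W W']
    (f : F) (a b : ι → W) : linePoint (f ∘ a) (f ∘ b) = f ∘ linePoint a b := by
  ext ⟨j, k⟩
  fin_cases k <;> simp [linePoint]

theorem IsLineFamily.comp [Add W] {κ : Type*} {a b : ι → W} (hab : IsLineFamily a b)
    {g : κ → ι} (hg : Injective g) : IsLineFamily (a ∘ g) (b ∘ g) :=
  Injective.comp hab (hg.prodMap injective_id)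

theorem IsLineFamily.map [Add W] {W' F : Type*} [Add W'] [FunLike F W W'] [AddHomClass F W W']
    {a b : ι → W} (hab : IsLineFamily a b) {f : F} (hf : Injective f) :
    IsLineFamily (f ∘ a) (f ∘ b) := by
  unfold IsLineFamily
  rw [linePoint_comp]
  exact hf.comp hab

theorem IsLineFamily.extend [Add W] {a b : ι → W} (hab : IsLineFamily a b) {σ : W → W}
    (hσ : IsOrthomorphism σ) :
    IsLineFamily (Sum.elim (fun j => (a j, (0 : ZMod 2), (0 : ZMod 2))) fun v => (v, 1, 0))
      (Sum.elim (fun j => (b j, 0, 0)) fun v => (σ v, 0, 1)) := by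
  set A : ι ⊕ W → W × ZMod 2 × ZMod 2 := Sum.elim (fun j => (a j, 0, 0)) fun v => (v, 1, 0)
  set B : ι ⊕ W → W × ZMod 2 × ZMod 2 := Sum.elim (fun j => (b j, 0, 0)) fun v => (σ v, 0, 1)
  have linePoint_inl (j : ι) (k : Fin 3) :
      linePoint A B (.inl j, k) = (linePoint a b (j, k), 0, 0) := by
    fin_cases k <;> simp [A, B, linePoint]
  rintro ⟨j | v, k⟩ ⟨j' | v', k'⟩ h
  · rw [linePoint_inl, linePoint_inl, Prod.mk.injEq] at h
    simpa using hab h.1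
  · fin_cases k <;> fin_cases k' <;> simp [A, B, linePoint] at h
  · fin_cases k <;> fin_cases k' <;> simp [A, B, linePoint] at h
  · fin_cases k <;> fin_cases k' <;> simp [A, B, linePoint] at h ⊢
    · exact h
    · exact hσ.1 h
    · exact hσ.2 h

variable [AddCommGroup W] [Module (ZMod 2) W]

theorem add_self_eq_zero_of_zmod_two (x : W) : x + x = 0 := by
  rw [← two_smul (ZMod 2), show (2 : ZMod 2) = 0 from rfl, zero_smul]

theorem IsLineFamily.linePoint_ne_zero {a b : ι → W} (hab : IsLineFamily a b)
    (p : ι × Fin 3) : linePoint a b p ≠ 0 := by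
  obtain ⟨j, k⟩ := p
  have h01 := @hab (j, 0) (j, 1)
  have h02 := @hab (j, 0) (j, 2)
  have h12 := @hab (j, 1) (j, 2)
  have := add_self_eq_zero_of_zmod_two (a j)
  fin_cases k <;> simp [linePoint] at h01 h02 h12 ⊢ <;> intro h <;> grind

end Lines

theorem exists_isOrthomorphism {m : ℕ} (hm : 2 ≤ m) :
    ∃ σ : (Fin m → ZMod 2) → Fin m → ZMod 2, IsOrthomorphism σ := by
  classical
  have hm0 : m ≠ 0 := by omega
  let F := GaloisField 2 m
  have := Fintype.ofFinite F
  obtain ⟨α, -, hα⟩ : ∃ α ∈ (Finset.univ : Finset F), α ∉ ({0, -1} : Finset F) := by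
    apply Finset.exists_mem_notMem_of_card_lt_card
    have : 2 ^ 2 ≤ 2 ^ m := Nat.pow_le_pow_right (by norm_num) hm
    rw [Finset.card_univ, ← Nat.card_eq_fintype_card, GaloisField.card 2 m hm0]
    exact Finset.card_le_two.trans_lt (by omega)
  simp only [Finset.mem_insert, Finset.mem_singleton, not_or] at hα
  let e : F ≃ₗ[ZMod 2] (Fin m → ZMod 2) :=
    LinearEquiv.ofFinrankEq _ _ (by simp [F, GaloisField.finrank 2 hm0])
  refine ⟨fun v => e (α * e.symm v), ?_, ?_⟩
  · exact e.injective.comp ((mul_right_injective₀ hα.1).comp e.symm.injective)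
  · have : (fun v => v + e (α * e.symm v)) = fun v => e ((1 + α) * e.symm v) := by
      ext1 v
      rw [add_mul, one_mul, map_add, e.apply_symm_apply]
    rw [this]
    refine e.injective.comp ((mul_right_injective₀ ?_).comp e.symm.injective)
    rw [add_comm, ← sub_neg_eq_add, sub_ne_zero]
    exact hα.2

def lineCount : ℕ → ℕ
  | 0 => 0
  | 1 => 0
  | 2 => 1
  | 3 => 1
  | m + 4 => lineCount (m + 2) + 2 ^ (m + 2)

theorem three_mul_lineCount {m : ℕ} (hm : 2 ≤ m) :
    (3 * lineCount m : ℤ) = 2 ^ m - 3 + 2 * (-1) ^ m := by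
  induction m using lineCount.induct with
  | case1 | case2 => omega
  | case3 | case4 => norm_num [lineCount]
  | case5 m ih =>
    show (3 * lineCount (m + 4) : ℤ) = 2 ^ (m + 4) - 3 + 2 * (-1) ^ (m + 4)
    rw [lineCount, Nat.cast_add, mul_add, ih (by omega)]
    push_cast
    ring

theorem exists_isLineFamily_fin_one {m : ℕ} (hm : 2 ≤ m) :
    ∃ a b : Fin 1 → Fin m → ZMod 2, IsLineFamily a b := by
  refine ⟨fun _ => Pi.single ⟨0, by omega⟩ 1, fun _ => Pi.single ⟨1, by omega⟩ 1, ?_⟩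
  rintro ⟨j, k⟩ ⟨j', k'⟩ h
  have h0 := congrFun h ⟨0, by omega⟩
  have h1 := congrFun h ⟨1, by omega⟩
  obtain rfl := Subsingleton.elim j j'
  fin_cases k <;> fin_cases k' <;> simp [linePoint] at h0 h1 ⊢

theorem exists_isLineFamily {m : ℕ} (hm : 2 ≤ m) :
    ∃ a b : Fin (lineCount m) → Fin m → ZMod 2, IsLineFamily a b := by
  induction m using lineCount.induct with
  | case1 | case2 => omega
  | case3 | case4 => exact exists_isLineFamily_fin_one hm
  | case5 m ih =>
    obtain ⟨a, b, hab⟩ := ih (by omega)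
    obtain ⟨σ, hσ⟩ := exists_isOrthomorphism (m := m + 2) (by omega)
    let f : ((Fin (m + 2) → ZMod 2) × ZMod 2 × ZMod 2) ≃ₗ[ZMod 2] (Fin (m + 4) → ZMod 2) :=
      LinearEquiv.ofFinrankEq _ _ (by simp)
    let g : Fin (lineCount (m + 4)) ≃ Fin (lineCount (m + 2)) ⊕ (Fin (m + 2) → ZMod 2) :=
      finSumFinEquiv.symm.trans
        (Equiv.sumCongr (.refl _) (Fintype.equivFinOfCardEq (by simp)).symm)
    exact ⟨_, _, ((hab.extend hσ).map f.injective).comp g.injective⟩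

section RecoverySets

variable {W ι : Type*} [AddCommGroup W] [Module (ZMod 2) W] [DecidableEq W]
  (a b : ι → W) (H : Submodule (ZMod 2) W) (e : W)

/-- For `v = 0` this is `{0, e}`, which contributes the singleton `{e}` once `0` is discarded. -/
def recoverySet : ι ⊕ ↥((H : Set W) \ Set.range (linePoint a b)) → Finset W
  | .inl j => Finset.univ.image fun k => linePoint a b (j, k) + e
  | .inr v => {(v : W), v + e}

variable {a b H e}

theorem sum_recoverySet (hab : IsLineFamily a b) (he : e ∉ H) (t) :
    ∑ v ∈ recoverySet a b H e t, v = e := by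
  rcases t with j | ⟨v, hv, -⟩
  · rw [recoverySet, Finset.sum_image fun k _ k' _ h => (Prod.mk.inj (hab (add_right_cancel h))).2,
      Fin.sum_univ_three]
    simp only [linePoint, Matrix.cons_val]
    have := add_self_eq_zero_of_zmod_two (a j)
    have := add_self_eq_zero_of_zmod_two (b j)
    have := add_self_eq_zero_of_zmod_two e
    grind
  · have hve : v ≠ v + e := fun h => he (left_eq_add.1 h ▸ H.zero_mem)
    rw [recoverySet, Finset.sum_pair hve, ← add_assoc, add_self_eq_zero_of_zmod_two, zero_add]

theorem notMem_range_of_mem_recoverySet (hH : ∀ p, linePoint a b p ∈ H) (he : e ∉ H)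
    {t} {v : W} (hv : v ∈ recoverySet a b H e t) : v ∉ Set.range (linePoint a b) := by
  rintro ⟨p, rfl⟩
  rcases t with j | ⟨w, hwH, hwS⟩ <;> simp only [recoverySet, Finset.mem_image, Finset.mem_univ,
    true_and, Finset.mem_insert, Finset.mem_singleton] at hv
  · obtain ⟨k, hk⟩ := hv
    exact (Submodule.add_mem_iff_right H (hH _)).not.mpr he (hk ▸ hH p)
  · rcases hv with h | h
    · exact hwS ⟨p, h⟩
    · exact (Submodule.add_mem_iff_right H hwH).not.mpr he (h ▸ hH p)

theorem pairwise_disjoint_recoverySet (hab : IsLineFamily a b) (hH : ∀ p, linePoint a b p ∈ H)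
    (he : e ∉ H) : Pairwise (Disjoint on recoverySet a b H e) := by
  have hcoset {x : W} (hx : x ∈ H) : x + e ∉ H := (Submodule.add_mem_iff_right H hx).not.mpr he
  have line_vs_pair {j : ι} {v : W} (hv : v ∈ H) (hvS : v ∉ Set.range (linePoint a b)) {x : W}
      (hx : ∃ k, linePoint a b (j, k) + e = x) : ¬(x = v ∨ x = v + e) := by
    obtain ⟨k, rfl⟩ := hx
    rintro (h | h)
    · exact hcoset (hH _) (h ▸ hv)
    · exact hvS ⟨_, add_right_cancel h⟩
  rintro (j | ⟨v, hv, hvS⟩) (j' | ⟨v', hv', hvS'⟩) hne <;>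
    simp only [Function.onFun, Finset.disjoint_left, recoverySet, Finset.mem_image,
      Finset.mem_univ, true_and, Finset.mem_insert, Finset.mem_singleton] <;> rintro x hx hx'
  · obtain ⟨k, rfl⟩ := hx
    obtain ⟨k', hk'⟩ := hx'
    exact hne (congrArg Sum.inl (Prod.mk.inj (hab (add_right_cancel hk'))).1.symm)
  · exact line_vs_pair hv' hvS' hx hx'
  · exact line_vs_pair hv hvS hx' hx
  · have hvv' : v ≠ v' := fun h => hne (by subst h; rfl)
    rcases hx with rfl | rfl <;> rcases hx' with h | h
    · exact hvv' h
    · exact hcoset hv' (h ▸ hv)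
    · exact hcoset hv (h ▸ hv')
    · exact hvv' (add_right_cancel h)

end RecoverySets

theorem isPIRMatrix_of_recoverySets {s n k : ℕ} {col : Fin n → Fin s → ZMod 2}
    (hcol : Injective col) (T : Fin s → Fin k → Finset (Fin s → ZMod 2))
    (hT : ∀ i j, ∀ v ∈ T i j, v ≠ 0 → v ∈ Set.range col)
    (hdisj : ∀ i, Pairwise (Disjoint on T i)) (hsum : ∀ i j, ∑ v ∈ T i j, v = Pi.single i 1) :
    IsPIRMatrix s n k (Matrix.of fun r h => col h r) := by
  classical
  intro i
  refine ⟨fun j => Finset.univ.filter (col · ∈ T i j), fun j j' hne => ?_, fun j => ?_⟩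
  · exact Finset.disjoint_filter.2 fun h _ h₁ h₂ => Finset.disjoint_left.1 (hdisj i hne) h₁ h₂
  · rw [← hsum i j]
    calc (∑ h ∈ Finset.univ.filter (col · ∈ T i j), fun r => Matrix.of (fun r h => col h r) r h)
        = ∑ v ∈ (Finset.univ.filter (col · ∈ T i j)).image col, v := by
          rw [Finset.sum_image hcol.injOn]; rfl
      _ = ∑ v ∈ T i j, v := by
          refine Finset.sum_subset (fun v hv => ?_) fun v hv hv' => ?_
          · obtain ⟨h, hh, rfl⟩ := Finset.mem_image.1 hv
            exact (Finset.mem_filter.1 hh).2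
          · by_contra h0
            obtain ⟨h, rfl⟩ := hT i j v hv h0
            exact hv' (Finset.mem_image_of_mem _ (by simpa using hv))

def evenWeight (s : ℕ) : Submodule (ZMod 2) (Fin s → ZMod 2) :=
  LinearMap.ker (∑ i, LinearMap.proj i : (Fin s → ZMod 2) →ₗ[ZMod 2] ZMod 2)

theorem single_notMem_evenWeight {s : ℕ} (i : Fin s) : Pi.single i 1 ∉ evenWeight s := by
  simp [evenWeight]

theorem finrank_evenWeight (m : ℕ) : Module.finrank (ZMod 2) (evenWeight (m + 1)) = m := by
  set φ : (Fin (m + 1) → ZMod 2) →ₗ[ZMod 2] ZMod 2 := ∑ i, LinearMap.proj i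
  have hφ : LinearMap.range φ = ⊤ :=
    LinearMap.range_eq_top.2 fun x => ⟨Pi.single 0 x, by simp [φ]⟩
  have := LinearMap.finrank_range_add_finrank_ker φ
  rw [hφ, finrank_top, Module.finrank_self, Module.finrank_fin_fun] at this
  change Module.finrank (ZMod 2) (LinearMap.ker φ) = m
  omega

theorem natCard_evenWeight (m : ℕ) : Nat.card (evenWeight (m + 1)) = 2 ^ m := by
  rw [Module.natCard_eq_pow_finrank (K := ZMod 2), finrank_evenWeight, Nat.card_zmod]

theorem exists_isPIRMatrix_of_isLineFamily {m lam : ℕ} {a b : Fin lam → Fin (m + 1) → ZMod 2}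
    (hab : IsLineFamily a b) (hH : ∀ p, linePoint a b p ∈ evenWeight (m + 1))
    (hl : 3 * lam ≤ 2 ^ m) :
    ∃ G, IsPIRMatrix (m + 1) (2 ^ (m + 1) - 1 - 3 * lam) (2 ^ m - 2 * lam) G := by
  classical
  set S := Set.range (linePoint a b)
  have hS : S.ncard = 3 * lam := by simp [S, Set.ncard_range_of_injective hab, mul_comm]
  have h0S : (0 : Fin (m + 1) → ZMod 2) ∉ S := fun ⟨p, hp⟩ => hab.linePoint_ne_zero p hp
  have hC : Nat.card ↥(insert 0 S)ᶜ = 2 ^ (m + 1) - 1 - 3 * lam := by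
    rw [Nat.card_coe_set_eq, Set.ncard_compl, Set.ncard_insert_of_notMem h0S, hS]
    simp
    omega
  have hκ : Nat.card (Fin lam ⊕ ↥((evenWeight (m + 1) : Set _) \ S)) = 2 ^ m - 2 * lam := by
    rw [Nat.card_sum, Nat.card_coe_set_eq, Set.ncard_sdiff (Set.range_subset_iff.2 hH), hS,
      ← Nat.card_coe_set_eq, SetLike.coe_sort_coe, natCard_evenWeight, Nat.card_eq_fintype_card,
      Fintype.card_fin]
    omega
  let col := Subtype.val ∘ (Finite.equivFinOfCardEq hC).symm
  have hcol : Set.range col = (insert 0 S)ᶜ := by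
    ext
    simp [col, Set.range_comp]
  refine ⟨_, isPIRMatrix_of_recoverySets (col := col)
    (Subtype.val_injective.comp (Finite.equivFinOfCardEq hC).symm.injective)
    (fun i j => recoverySet a b _ (Pi.single i 1) ((Finite.equivFinOfCardEq hκ).symm j))
    (fun i j v hv hv0 => ?_)
    (fun i => (pairwise_disjoint_recoverySet hab hH (single_notMem_evenWeight i)).comp_of_injective
      (Finite.equivFinOfCardEq hκ).symm.injective)
    (fun i j => sum_recoverySet hab (single_notMem_evenWeight i) _)⟩
  rw [hcol, Set.mem_compl_iff, Set.mem_insert_iff, not_or]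
  exact ⟨hv0, notMem_range_of_mem_recoverySet hH (single_notMem_evenWeight i) hv⟩

/-- For `s ≥ 3` and `0 ≤ λ ≤ (2^{s-1} - 3 - 2(-1)^s)/3` we have
`P(s, 2^{s-1} - 2λ) ≤ 2^s - 1 - 3λ`, witnessed by an actual PIR matrix. -/
theorem stmt_2 (s : ℕ) (hs : 3 ≤ s) (lam : ℕ)
    (hlam : (3 * lam : ℤ) ≤ 2 ^ (s - 1) - 3 - 2 * (-1 : ℤ) ^ s) :
    PIRlen s (2 ^ (s - 1) - 2 * lam) ≤ 2 ^ s - 1 - 3 * lam ∧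
    ∃ G : Matrix (Fin s) (Fin (2 ^ s - 1 - 3 * lam)) (ZMod 2),
      IsPIRMatrix s (2 ^ s - 1 - 3 * lam) (2 ^ (s - 1) - 2 * lam) G := by
  obtain ⟨m, rfl⟩ : ∃ m, s = m + 1 := ⟨s - 1, by omega⟩
  have hm : 2 ≤ m := by omega
  rw [Nat.add_sub_cancel] at hlam ⊢
  have hlamL : lam ≤ lineCount m := by
    have := three_mul_lineCount hm
    rw [pow_succ] at hlam
    exact_mod_cast (by linarith : (lam : ℤ) ≤ lineCount m)
  have hl : 3 * lam ≤ 2 ^ m := by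
    have : (3 * lam : ℤ) ≤ 2 ^ m := by
      rcases neg_one_pow_eq_or ℤ (m + 1) with h | h <;> rw [h] at hlam <;> linarith
    exact_mod_cast this
  obtain ⟨a, b, hab⟩ := exists_isLineFamily hm
  let e := LinearEquiv.ofFinrankEq (Fin m → ZMod 2) (evenWeight (m + 1))
    (by rw [finrank_evenWeight, Module.finrank_fin_fun])
  let f := (evenWeight (m + 1)).subtype ∘ₗ e.toLinearMap
  obtain ⟨G, hG⟩ := exists_isPIRMatrix_of_isLineFamily
    ((hab.comp (Fin.castLE_injective hlamL)).map (f := f) (Subtype.val_injective.comp e.injective))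
    (fun p => by rw [linePoint_comp]; exact (e _).2) hl
  have : 2 ^ (m + 1) = 2 * 2 ^ m := by ring
  have := Nat.one_le_two_pow (n := m)
  exact ⟨Nat.sInf_le ⟨by omega, G, hG⟩, G, hG⟩
end

section
/- For every integer s ≥ 3 one has P(s, 2^{s-1} − 2) = 2^s − 4; that is, there exists an s-by-(2^s − 4) matrix over F_2 that is a (2^{s-1} − 2)-PIR generator matrix, and no such matrix with fewer than 2^s − 4 columns exists. -/
open Finset Matrix

/-!
Lower bound: for nonzero `u ∈ 𝔽₂ˢ` pick `i` with `uᵢ = 1`; each of the `k` disjoint recovery sets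
of `eᵢ` contains a column `c` with `u ⬝ᵥ c = 1`. A fixed column has `u ⬝ᵥ c = 1` for at most
`2 ^ (s - 1)` vectors `u`, so double counting gives `(2 ^ s - 1) k ≤ n 2 ^ (s - 1)`, which for
`k = 2 ^ (s - 1) - 2` forces `n ≥ 2 ^ s - 4`.

Upper bound: take as columns all vectors outside the Klein four-group `Q = {0, e₀, e₁, e₀ + e₁}`.
If `eᵢ ∈ Q`, the columns split into the `2 ^ (s - 1) - 2` pairs `{v, v + eᵢ}`. If `eᵢ ∉ Q`, the
coset `Q + eᵢ` (which sums to `0`) gives the two recovery sets `{eᵢ}` and `(Q + eᵢ) \ {eᵢ}`, and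
the other `2 ^ s - 8` columns again pair up.
-/

lemma two_mul_card_filter_eq_one_le {V : Type*} [AddGroup V] [Fintype V] (φ : V →+ ZMod 2) :
    2 * #{x | φ x = 1} ≤ Fintype.card V := by
  by_cases h : ∃ w, φ w = 1
  · obtain ⟨w, hw⟩ := h
    have hle : #{x | φ x = 1} ≤ #{x | ¬φ x = 1} := by
      refine card_le_card_of_injOn (· + w) (fun x hx => ?_) (add_left_injective w).injOn
      simp only [coe_filter, mem_univ, true_and, Set.mem_ofPred_eq] at hx ⊢
      rw [map_add, hx, hw]
      decide
    have := card_filter_add_card_filter_not (s := univ) (fun x => φ x = 1)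
    rw [card_univ] at this
    omega
  · push Not at h
    simp [h]

lemma two_mul_sub_four_le_of_mul_le {t n : ℕ} (h : (2 * t - 1) * (t - 2) ≤ n * t) :
    2 * t - 4 ≤ n := by
  by_contra! hn
  obtain ⟨m, rfl⟩ : ∃ m, t = m + 3 := ⟨t - 3, by omega⟩
  rw [show 2 * (m + 3) - 1 = 2 * m + 5 by omega, show m + 3 - 2 = m + 1 by omega] at h
  have hn' : n ≤ 2 * m + 1 := by omega
  nlinarith [Nat.mul_le_mul_right (m + 3) hn']

section IsPIRMatrix

variable {s n k : ℕ} {G : Matrix (Fin s) (Fin n) (ZMod 2)}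

lemma IsPIRMatrix.le_card_filter_vecMul_eq_one (hG : IsPIRMatrix s n k G)
    {u : Fin s → ZMod 2} (hu : u ≠ 0) : k ≤ #{h | (u ᵥ* G) h = 1} := by
  have hZMod2 : ∀ x : ZMod 2, x ≠ 0 ↔ x = 1 := by decide
  obtain ⟨i, hi⟩ := Function.ne_iff.1 hu
  obtain ⟨R, hdisj, hsum⟩ := hG i
  have hhit : ∀ j, ∃ h ∈ R j, (u ᵥ* G) h = 1 := fun j => by
    have hj : ∑ h ∈ R j, (u ᵥ* G) h ≠ 0 := by
      rw [show ∑ h ∈ R j, (u ᵥ* G) h = u ⬝ᵥ ∑ h ∈ R j, fun r => G r h from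
        (dotProduct_sum ..).symm, hsum j, dotProduct_single, mul_one]
      exact hi
    obtain ⟨h, hh, hne⟩ := exists_ne_zero_of_sum_ne_zero hj
    exact ⟨h, hh, (hZMod2 _).1 hne⟩
  choose g hgR hg using hhit
  calc k = #(univ : Finset (Fin k)) := by simp
    _ ≤ _ := card_le_card_of_injOn g (fun j _ => by simpa using hg j) fun j _ j' _ hjj' => by
        by_contra hne
        exact disjoint_left.1 (hdisj j j' hne) (hgR j) (hjj' ▸ hgR j')

lemma IsPIRMatrix.card_mul_le (hG : IsPIRMatrix s n k G) :
    (2 ^ s - 1) * k ≤ n * 2 ^ (s - 1) := by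
  have hnonzero : #({u | u ≠ 0} : Finset (Fin s → ZMod 2)) = 2 ^ s - 1 := by
    rw [filter_ne', card_erase_of_mem (mem_univ _), card_univ]
    simp
  have hcol : ∀ h : Fin n, #({u | (u ᵥ* G) h = 1} : Finset (Fin s → ZMod 2)) ≤ 2 ^ (s - 1) := by
    intro h
    have := two_mul_card_filter_eq_one_le
      (AddMonoidHom.mk' (fun u : Fin s → ZMod 2 => (u ᵥ* G) h) fun u v => by rw [add_vecMul]; rfl)
    simp only [AddMonoidHom.mk'_apply, Fintype.card_fun, ZMod.card, Fintype.card_fin] at this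
    have hpow : 2 ^ s ≤ 2 * 2 ^ (s - 1) := by
      rcases s with _ | s <;> simp [pow_succ, mul_comm]
    omega
  have := card_mul_le_card_mul (fun u h => (u ᵥ* G) h = 1) (s := {u | u ≠ 0}) (t := univ)
    (fun u hu => hG.le_card_filter_vecMul_eq_one (mem_filter.1 hu).2)
    (fun h _ => (card_le_card (filter_subset_filter _ (subset_univ _))).trans (hcol h))
  rwa [hnonzero, card_univ, Fintype.card_fin] at this

lemma IsPIRMatrix.two_pow_sub_four_le (hG : IsPIRMatrix s n (2 ^ (s - 1) - 2) G) :
    2 ^ s - 4 ≤ n := by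
  rcases s with _ | s
  · simp
  · have := hG.card_mul_le
    rw [pow_succ'] at this ⊢
    exact two_mul_sub_four_le_of_mul_le this

lemma PIRlen_eq_of_isPIRMatrix (hn : 0 < n) (hG : IsPIRMatrix s n k G)
    (hmin : ∀ m (G' : Matrix (Fin s) (Fin m) (ZMod 2)), IsPIRMatrix s m k G' → n ≤ m) :
    PIRlen s k = n :=
  le_antisymm (Nat.sInf_le ⟨hn, G, hG⟩)
    (le_csInf ⟨n, hn, G, hG⟩ fun m ⟨_, G', hG'⟩ => hmin m G' hG')

end IsPIRMatrix

section RecoveryFamily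

variable {V : Type*} [AddCommMonoid V]

def IsRecoveryFamily (S : Finset V) (u : V) (𝓡 : Finset (Finset V)) : Prop :=
  (𝓡 : Set (Finset V)).PairwiseDisjoint id ∧ ∀ R ∈ 𝓡, R ⊆ S ∧ ∑ v ∈ R, v = u

variable {S₁ S₂ : Finset V} {u : V} {𝓡₁ 𝓡₂ : Finset (Finset V)}

lemma IsRecoveryFamily.union [DecidableEq V] (h₁ : IsRecoveryFamily S₁ u 𝓡₁)
    (h₂ : IsRecoveryFamily S₂ u 𝓡₂) (hS : Disjoint S₁ S₂) :
    IsRecoveryFamily (S₁ ∪ S₂) u (𝓡₁ ∪ 𝓡₂) := by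
  refine ⟨?_, fun R hR => ?_⟩
  · rw [coe_union]
    exact h₁.1.union h₂.1 fun R₁ hR₁ R₂ hR₂ _ => hS.mono (h₁.2 R₁ hR₁).1 (h₂.2 R₂ hR₂).1
  · rcases mem_union.1 hR with hR | hR
    · exact ⟨(h₁.2 R hR).1.trans subset_union_left, (h₁.2 R hR).2⟩
    · exact ⟨(h₂.2 R hR).1.trans subset_union_right, (h₂.2 R hR).2⟩

lemma IsRecoveryFamily.disjoint (h₁ : IsRecoveryFamily S₁ u 𝓡₁) (h₂ : IsRecoveryFamily S₂ u 𝓡₂)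
    (hS : Disjoint S₁ S₂) (hu : u ≠ 0) : Disjoint 𝓡₁ 𝓡₂ := by
  refine disjoint_left.2 fun R hR₁ hR₂ => hu ?_
  have hR : R = ∅ := disjoint_self.1 (hS.mono (h₁.2 R hR₁).1 (h₂.2 R hR₂).1)
  rw [← (h₁.2 R hR₁).2, hR, sum_empty]

end RecoveryFamily

section CharTwo

variable {V : Type*} [AddCommGroup V] [Module (ZMod 2) V] [DecidableEq V]

lemma pair_add_eq_of_mem {u v x : V} (hx : x ∈ ({v, v + u} : Finset V)) :
    ({x, x + u} : Finset V) = {v, v + u} := by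
  rcases mem_insert.1 hx with rfl | hx
  · rfl
  · rw [mem_singleton.1 hx, add_assoc, ZModModule.add_self, add_zero, pair_comm]

lemma exists_pair_recoveryFamily {u : V} (hu : u ≠ 0) {T : Finset V}
    (hT : ∀ v ∈ T, v + u ∈ T) : ∃ 𝓡, 2 * #𝓡 = #T ∧ IsRecoveryFamily T u 𝓡 := by
  set pair : V → Finset V := fun v => {v, v + u}
  have hne : ∀ v : V, v ≠ v + u := fun v h => hu (by simpa using h)
  have hpair_subset : ∀ v ∈ T, pair v ⊆ T := fun v hv => by
    simp [pair, insert_subset_iff, hv, hT v hv]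
  have hfiber : ∀ v ∈ T, {w ∈ T | pair w = pair v} = pair v := fun v hv => by
    ext w
    simp only [mem_filter]
    exact ⟨fun h => h.2 ▸ mem_insert_self w _,
      fun h => ⟨hpair_subset v hv h, pair_add_eq_of_mem h⟩⟩
  refine ⟨T.image pair, ?_, ?_, fun R hR => ?_⟩
  · rw [card_eq_sum_card_image pair T, sum_congr rfl fun R hR => ?_, sum_const, smul_eq_mul,
      mul_comm]
    obtain ⟨v, hv, rfl⟩ := mem_image.1 hR
    rw [hfiber v hv, card_pair (hne v)]
  · rw [coe_image]
    rintro _ ⟨v, -, rfl⟩ _ ⟨w, -, rfl⟩ hvw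
    exact disjoint_left.2 fun x hxv hxw =>
      hvw ((pair_add_eq_of_mem hxv).symm.trans (pair_add_eq_of_mem hxw))
  · obtain ⟨v, hv, rfl⟩ := mem_image.1 hR
    refine ⟨hpair_subset v hv, ?_⟩
    rw [sum_pair (hne v), ← add_assoc, ZModModule.add_self, zero_add]

lemma isRecoveryFamily_singleton_erase {C : Finset V} {u : V} (hC : ∑ v ∈ C, v = 0)
    (hu : u ∈ C) : IsRecoveryFamily C u {{u}, C.erase u} := by
  have hdisj : Disjoint {u} (C.erase u) := disjoint_singleton_left.2 (notMem_erase u C)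
  refine ⟨?_, ?_⟩
  · rw [coe_pair]
    exact Set.pairwise_pair.2 fun _ => ⟨hdisj, hdisj.symm⟩
  · simp only [mem_insert, mem_singleton, forall_eq_or_imp, forall_eq]
    refine ⟨⟨singleton_subset_iff.2 hu, sum_singleton _ _⟩, erase_subset u C, ?_⟩
    rw [← add_right_cancel_iff (a := u), sum_erase_add C _ hu, hC, ZModModule.add_self]

def kleinFour (a b : V) : Finset V := {0, a, b, a + b}

variable {a b : V}

lemma add_mem_kleinFour {x y : V} (hx : x ∈ kleinFour a b) (hy : y ∈ kleinFour a b) :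
    x + y ∈ kleinFour a b := by
  simp only [kleinFour, mem_insert, mem_singleton] at hx hy ⊢
  rcases hx with rfl | rfl | rfl | rfl <;> rcases hy with rfl | rfl | rfl | rfl <;>
    simp [ZModModule.add_self, add_left_comm, add_comm]

lemma card_kleinFour_eq_four_and_sum_eq_zero (ha : a ≠ 0) (hb : b ≠ 0) (hab : a ≠ b) :
    #(kleinFour a b) = 4 ∧ ∑ x ∈ kleinFour a b, x = 0 := by
  have hab' : a + b ≠ 0 := fun h => hab (by rwa [← sub_eq_zero, ZModModule.sub_eq_add])
  have h0 : (0 : V) ∉ ({a, b, a + b} : Finset V) := by simp [ha.symm, hb.symm, hab'.symm]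
  have h1 : a ∉ ({b, a + b} : Finset V) := by simp [hab, hb]
  have h2 : b ≠ a + b := by simp [ha]
  rw [kleinFour, card_insert_of_notMem h0, card_insert_of_notMem h1, card_pair h2,
    sum_insert h0, sum_insert h1, sum_pair h2, zero_add, ← add_assoc, ZModModule.add_self]
  exact ⟨rfl, rfl⟩

variable [Fintype V]

lemma exists_recoveryFamily_compl_kleinFour_of_mem {u : V} (hu : u ≠ 0)
    (huQ : u ∈ kleinFour a b) :
    ∃ 𝓡, 2 * #𝓡 = #(kleinFour a b)ᶜ ∧ IsRecoveryFamily (kleinFour a b)ᶜ u 𝓡 := by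
  refine exists_pair_recoveryFamily hu fun v hv => mem_compl.2 fun hvu => ?_
  rw [← add_zero v, ← ZModModule.add_self u, ← add_assoc] at hv
  exact mem_compl.1 hv (add_mem_kleinFour hvu huQ)

lemma exists_recoveryFamily_compl_kleinFour_of_notMem (ha : a ≠ 0) (hb : b ≠ 0) (hab : a ≠ b)
    {u : V} (hu : u ≠ 0) (huQ : u ∉ kleinFour a b) :
    ∃ 𝓡, 2 * #𝓡 = #(kleinFour a b)ᶜ ∧ IsRecoveryFamily (kleinFour a b)ᶜ u 𝓡 := by
  obtain ⟨hQcard, hQsum⟩ := card_kleinFour_eq_four_and_sum_eq_zero ha hb hab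
  set Q := kleinFour a b
  set C := Q.map (Equiv.addRight u).toEmbedding
  have hmemC : ∀ v, v ∈ C ↔ v + u ∈ Q := fun v => by
    simp [C, mem_map_equiv, ZModModule.neg_eq_self]
  set T : Finset V := {v | v ∉ Q ∧ v + u ∉ Q}
  have hQT : Qᶜ = T ∪ C := by
    ext v
    simp only [mem_compl, mem_union, mem_filter, mem_univ, true_and, hmemC, T]
    refine ⟨fun hv => by tauto, ?_⟩
    rintro (h | h) hv
    · exact h.1 hv
    · exact huQ (by simpa [← add_assoc, ZModModule.add_self] using add_mem_kleinFour hv h)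
  have hTC : Disjoint T C :=
    disjoint_left.2 fun v hT hC => (mem_filter.1 hT).2.2 ((hmemC v).1 hC)
  have hCsum : ∑ v ∈ C, v = 0 := by
    rw [sum_map]
    simp only [Equiv.coe_toEmbedding, Equiv.coe_addRight, sum_add_distrib, sum_const, hQsum,
      hQcard]
    rw [zero_add, show 4 = 2 * 2 from rfl, mul_nsmul, ZModModule.char_nsmul_eq_zero]
  have huC : u ∈ C := (hmemC u).2 (by rw [ZModModule.add_self]; simp [Q, kleinFour])
  obtain ⟨𝓡₀, h𝓡₀card, h𝓡₀⟩ := exists_pair_recoveryFamily hu (T := T) fun v hv => by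
    simp only [mem_filter, mem_univ, true_and, T] at hv ⊢
    rw [add_assoc, ZModModule.add_self, add_zero]
    exact hv.symm
  have h𝓡₁ := isRecoveryFamily_singleton_erase hCsum huC
  refine ⟨𝓡₀ ∪ {{u}, C.erase u}, ?_, hQT ▸ h𝓡₀.union h𝓡₁ hTC⟩
  rw [card_union_of_disjoint (h𝓡₀.disjoint h𝓡₁ hTC hu), card_pair, hQT,
    card_union_of_disjoint hTC, card_map, hQcard]
  · omega
  · exact fun h => notMem_erase u C (h ▸ mem_singleton_self u)

lemma exists_recoveryFamily_compl_kleinFour (ha : a ≠ 0) (hb : b ≠ 0) (hab : a ≠ b) {u : V}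
    (hu : u ≠ 0) :
    ∃ 𝓡, 2 * #𝓡 = #(kleinFour a b)ᶜ ∧ IsRecoveryFamily (kleinFour a b)ᶜ u 𝓡 := by
  by_cases huQ : u ∈ kleinFour a b
  · exact exists_recoveryFamily_compl_kleinFour_of_mem hu huQ
  · exact exists_recoveryFamily_compl_kleinFour_of_notMem ha hb hab hu huQ

end CharTwo

lemma exists_isPIRMatrix_of_recoveryFamily {s n k : ℕ} (S : Finset (Fin s → ZMod 2))
    (hS : #S = n) (h : ∀ i : Fin s, ∃ 𝓡, #𝓡 = k ∧ IsRecoveryFamily S (Pi.single i 1) 𝓡) :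
    ∃ G : Matrix (Fin s) (Fin n) (ZMod 2), IsPIRMatrix s n k G := by
  set col : Fin n → Fin s → ZMod 2 := fun h => (S.equivFinOfCardEq hS).symm h
  have hinj : col.Injective := Subtype.val_injective.comp (Equiv.injective _)
  have hrange : ∀ v ∈ S, v ∈ Set.range col :=
    fun v hv => ⟨S.equivFinOfCardEq hS ⟨v, hv⟩, by simp [col]⟩
  refine ⟨Matrix.of fun r h => col h r, fun i => ?_⟩
  obtain ⟨𝓡, h𝓡card, h𝓡disj, h𝓡⟩ := h i
  set e := (𝓡.equivFinOfCardEq h𝓡card).symm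
  refine ⟨fun j => (e j : Finset _).preimage col hinj.injOn, fun j j' hjj' => ?_, fun j => ?_⟩
  · exact disjoint_preimage (h𝓡disj (e j).2 (e j').2 fun h => hjj' (e.injective (Subtype.ext h)))
  · obtain ⟨hsub, hsum⟩ := h𝓡 _ (e j).2
    rw [← hsum]
    exact sum_preimage col _ hinj.injOn id fun v hv hvr => (hvr (hrange v (hsub hv))).elim

lemma exists_isPIRMatrix_two_pow_sub_four {s : ℕ} (hs : 2 ≤ s) :
    ∃ G : Matrix (Fin s) (Fin (2 ^ s - 4)) (ZMod 2),
      IsPIRMatrix s (2 ^ s - 4) (2 ^ (s - 1) - 2) G := by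
  set a : Fin s → ZMod 2 := Pi.single ⟨0, by omega⟩ 1
  set b : Fin s → ZMod 2 := Pi.single ⟨1, by omega⟩ 1
  have ha : a ≠ 0 := by simp [a]
  have hb : b ≠ 0 := by simp [b]
  have hab : a ≠ b := fun h => by
    simpa [a, b, Pi.single_apply, Fin.ext_iff] using congrFun h ⟨0, by omega⟩
  have hcard : #(kleinFour a b)ᶜ = 2 ^ s - 4 := by
    rw [card_compl, (card_kleinFour_eq_four_and_sum_eq_zero ha hb hab).1]
    simp
  refine exists_isPIRMatrix_of_recoveryFamily _ hcard fun i => ?_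
  obtain ⟨𝓡, h𝓡card, h𝓡⟩ :=
    exists_recoveryFamily_compl_kleinFour ha hb hab (u := Pi.single i 1) (by simp)
  refine ⟨𝓡, ?_, h𝓡⟩
  have : 2 ^ s = 2 * 2 ^ (s - 1) := by rw [← pow_succ']; congr; omega
  omega

/-- For every `s ≥ 3` one has `P(s, 2^{s-1} - 2) = 2^s - 4`: a PIR matrix of
length `2^s - 4` exists and no shorter one does. -/
theorem stmt_3 (s : ℕ) (hs : 3 ≤ s) :
    PIRlen s (2 ^ (s - 1) - 2) = 2 ^ s - 4 ∧
    (∃ G : Matrix (Fin s) (Fin (2 ^ s - 4)) (ZMod 2),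
      IsPIRMatrix s (2 ^ s - 4) (2 ^ (s - 1) - 2) G) ∧
    ∀ n : ℕ, n < 2 ^ s - 4 → ∀ G : Matrix (Fin s) (Fin n) (ZMod 2),
      ¬ IsPIRMatrix s n (2 ^ (s - 1) - 2) G := by
  obtain ⟨G, hG⟩ := exists_isPIRMatrix_two_pow_sub_four (by omega : 2 ≤ s)
  have hpos : 0 < 2 ^ s - 4 := by
    have : 2 ^ 3 ≤ 2 ^ s := Nat.pow_le_pow_right two_pos hs
    omega
  refine ⟨PIRlen_eq_of_isPIRMatrix hpos hG fun m G' hG' => hG'.two_pow_sub_four_le, ⟨G, hG⟩, ?_⟩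
  exact fun n hn G' hG' => hn.not_ge hG'.two_pow_sub_four_le
end

section
/- Let G be an s-by-n matrix over F_2 that is a k-PIR generator matrix, and let d⊥ be a positive integer such that every nonzero vector v ∈ F_2^n with G·v = 0 has Hamming weight at least d⊥. If some column of G equals a standard unit vector e_i of F_2^s, then n ≥ 1 + (k−1)·(d⊥ − 1). -/
/-!
Fix a unit column `a = e_i` and the `k` disjoint recovery sets of `e_i`. At most one of them
contains `a`. For every other set `R`, the columns indexed by `R ∪ {a}` sum to `e_i + e_i = 0`,
so the indicator vector of `R ∪ {a}` is a nonzero dual codeword and `|R| + 1 ≥ d⊥`. The at least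
`k - 1` sets avoiding `a` are disjoint, so together with `a` they occupy
`1 + (k - 1)(d⊥ - 1)` columns.
-/

open Finset Function Matrix

theorem Finset.card_filter_mem_le_one {ι α : Type*} [Fintype ι] [DecidableEq α] {R : ι → Finset α}
    (hR : Pairwise (Disjoint on R)) (a : α) : #{j | a ∈ R j} ≤ 1 :=
  card_le_one.2 fun _ hj _ hj' => by
    by_contra hne
    exact disjoint_left.1 (hR hne) (mem_filter.1 hj).2 (mem_filter.1 hj').2

theorem Finset.one_add_mul_le_card_of_pairwiseDisjoint {ι α : Type*} [Fintype ι] [Fintype α]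
    [DecidableEq α] {R : ι → Finset α} (hR : Pairwise (Disjoint on R)) (a : α) {m : ℕ}
    (hm : ∀ j, a ∉ R j → m ≤ #(R j)) : 1 + (Fintype.card ι - 1) * m ≤ Fintype.card α := by
  set S : Finset ι := {j | a ∉ R j}
  have hS : Fintype.card ι - 1 ≤ #S := by
    have hsplit := card_filter_add_card_filter_not (s := univ) (fun j => a ∈ R j)
    have hmem := card_filter_mem_le_one hR a
    rw [card_univ] at hsplit
    have : #S = #{j | ¬a ∈ R j} := by congr 1
    omega
  have haS : a ∉ S.biUnion R := by
    simp only [S, mem_biUnion, mem_filter, mem_univ, true_and]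
    exact fun ⟨j, hj, haj⟩ => hj haj
  calc 1 + (Fintype.card ι - 1) * m
      ≤ 1 + ∑ j ∈ S, #(R j) := by
        gcongr
        calc (Fintype.card ι - 1) * m ≤ #S * m := by gcongr
          _ = ∑ _j ∈ S, m := by rw [sum_const, smul_eq_mul]
          _ ≤ ∑ j ∈ S, #(R j) := sum_le_sum fun j hj => hm j (mem_filter.1 hj).2
    _ = #(insert a (S.biUnion R)) := by
        rw [card_insert_of_notMem haS, card_biUnion fun j _ j' _ hne => hR hne, add_comm]
    _ ≤ Fintype.card α := card_le_univ _

section DualDistance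

variable {m n R : Type*} [Fintype n] [DecidableEq n]

theorem Matrix.mulVec_sum_single_one [NonAssocSemiring R] (G : Matrix m n R) (T : Finset n) :
    G *ᵥ (∑ h ∈ T, Pi.single h 1) = ∑ h ∈ T, G.col h := by
  simp only [mulVec_sum, mulVec_single_one]

theorem card_filter_sum_single_one_ne_zero [NonAssocSemiring R] [Nontrivial R] [DecidableEq R]
    (T : Finset n) : #{j | (∑ h ∈ T, Pi.single h (1 : R)) j ≠ 0} = #T := by
  congr 1
  ext j
  simp [Finset.sum_apply, Pi.single_apply]

variable [Ring R] [CharP R 2] [DecidableEq R] {G : Matrix m n R} {d : ℕ}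

theorem le_card_insert_of_sum_col_eq_col
    (hdual : ∀ v : n → R, v ≠ 0 → G *ᵥ v = 0 → d ≤ #{j | v j ≠ 0})
    {a : n} {T : Finset n} (ha : a ∉ T) (hsum : ∑ h ∈ T, G.col h = G.col a) :
    d ≤ #T + 1 := by
  have : Nontrivial R := CharP.nontrivial_of_char_ne_one (v := 2) (by decide)
  have hv : ∑ h ∈ insert a T, Pi.single h (1 : R) ≠ 0 := by
    intro h0
    simpa [Finset.sum_apply, ha] using congrFun h0 a
  have hker : G *ᵥ (∑ h ∈ insert a T, Pi.single h 1) = 0 := by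
    rw [mulVec_sum_single_one, sum_insert ha, hsum]
    exact funext fun _ => CharTwo.add_self_eq_zero _
  have := hdual _ hv hker
  rwa [card_filter_sum_single_one_ne_zero, card_insert_of_notMem ha] at this

end DualDistance

theorem stmt_8_general (s n k : ℕ)
    (G : Matrix (Fin s) (Fin n) (ZMod 2)) (hG : IsPIRMatrix s n k G)
    (dperp : ℕ)
    (hdual : ∀ v : Fin n → ZMod 2, v ≠ 0 → G.mulVec v = 0 →
      dperp ≤ (Finset.univ.filter fun j : Fin n => v j ≠ 0).card)
    (hunit : ∃ i : Fin s, ∃ j : Fin n,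
      (fun r : Fin s => G r j) = Pi.single i 1) :
    1 + (k - 1) * (dperp - 1) ≤ n := by
  obtain ⟨i, a, ha⟩ := hunit
  obtain ⟨R, hdisj, hsum⟩ := hG i
  have hlarge : ∀ j, a ∉ R j → dperp - 1 ≤ #(R j) := fun j haj => by
    have hcol : ∑ h ∈ R j, G.col h = G.col a := by
      change (∑ h ∈ R j, fun r => G r h) = fun r => G r a
      rw [hsum j, ha]
    have := le_card_insert_of_sum_col_eq_col hdual haj hcol
    omega
  simpa using one_add_mul_le_card_of_pairwiseDisjoint hdisj a hlarge

/-- If a `k`-PIR generator matrix contains a standard unit vector as a column,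
then `n ≥ 1 + (k-1)(d⊥ - 1)`. -/
theorem stmt_8 (s n k : ℕ)
    (G : Matrix (Fin s) (Fin n) (ZMod 2)) (hG : IsPIRMatrix s n k G)
    (dperp : ℕ) (hd : 0 < dperp)
    (hdual : ∀ v : Fin n → ZMod 2, v ≠ 0 → G.mulVec v = 0 →
      dperp ≤ (Finset.univ.filter fun j : Fin n => v j ≠ 0).card)
    (hunit : ∃ i : Fin s, ∃ j : Fin n,
      (fun r : Fin s => G r j) = Pi.single i 1) :
    1 + (k - 1) * (dperp - 1) ≤ n :=
  stmt_8_general s n k G hG dperp hdual hunit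
end

section
/- For every integer s ≥ 4 one has P(s, 2^{s-2}) ≥ 2^{s-1} + 1; that is, no s-by-2^{s-1} matrix over F_2 is a 2^{s-2}-PIR generator matrix. -/
lemma zmod2_cases (x : ZMod 2) : x = 0 ∨ x = 1 := by
  have : ∀ y : ZMod 2, y = 0 ∨ y = 1 := by decide
  exact this x

lemma zmod2_ne_zero {x : ZMod 2} (h : x ≠ 0) : x = 1 :=
  (zmod2_cases x).resolve_left h

lemma zmod2_natCast_eq_one {m : ℕ} (h : (m : ZMod 2) = 1) : m % 2 = 1 := by
  have h2 : ((m % 2 : ℕ) : ZMod 2) = 1 := by rwa [ZMod.natCast_mod]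
  have : m % 2 = 0 ∨ m % 2 = 1 := by omega
  rcases this with h0 | h1
  · rw [h0] at h2; simp at h2
  · exact h1

lemma zmod2_add_eq_zero (a b : ZMod 2) : a + b = 0 ↔ a = b := by
  revert a b; decide

section Count

variable {s : ℕ}

lemma single_add_single_cancel (w : Fin s → ZMod 2) (r0 : Fin s) :
    (w + Pi.single r0 1 : Fin s → ZMod 2) + Pi.single r0 1 = w := by
  funext r
  rcases eq_or_ne r r0 with rfl | h
  · have h11 : (1 : ZMod 2) + 1 = 0 := by decide
    simp [add_assoc, h11]
  · simp [Pi.single_eq_of_ne h]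

lemma count_dot_one (v : Fin s → ZMod 2) (hv : v ≠ 0) :
    (Finset.univ.filter (fun w : Fin s → ZMod 2 => ∑ r, w r * v r = 1)).card = 2 ^ (s - 1) := by
  obtain ⟨r0, hr0⟩ : ∃ r, v r = 1 := by
    by_contra hc
    push_neg at hc
    apply hv
    funext r
    rcases zmod2_cases (v r) with h | h
    · exact h
    · exact absurd h (hc r)
  have key : ∀ w : Fin s → ZMod 2,
      ∑ r, (w + Pi.single r0 1 : Fin s → ZMod 2) r * v r = (∑ r, w r * v r) + 1 := by
    intro w
    have hx : ∀ r, (w + Pi.single r0 1 : Fin s → ZMod 2) r * v r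
        = w r * v r + (Pi.single r0 1 : Fin s → ZMod 2) r * v r := by
      intro r; simp [add_mul]
    rw [Finset.sum_congr rfl (fun r _ => hx r), Finset.sum_add_distrib]
    congr 1
    rw [Finset.sum_eq_single r0]
    · simp [hr0]
    · intro b _ hb; simp [Pi.single_eq_of_ne hb]
    · simp
  have hbij : (Finset.univ.filter (fun w : Fin s → ZMod 2 => ∑ r, w r * v r = 1)).card =
      (Finset.univ.filter (fun w : Fin s → ZMod 2 => ∑ r, w r * v r = 0)).card := by
    apply Finset.card_nbij' (fun w => w + Pi.single r0 1) (fun w => w + Pi.single r0 1)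
    · intro w hw
      simp only [Finset.mem_coe, Finset.mem_filter, Finset.mem_univ, true_and] at hw ⊢
      rw [key w, hw]; decide
    · intro w hw
      simp only [Finset.mem_coe, Finset.mem_filter, Finset.mem_univ, true_and] at hw ⊢
      rw [key w, hw]; decide
    · intro w _; exact single_add_single_cancel w r0
    · intro w _; exact single_add_single_cancel w r0
  have hsplit : (Finset.univ.filter (fun w : Fin s → ZMod 2 => ∑ r, w r * v r = 1)).card +
      (Finset.univ.filter (fun w : Fin s → ZMod 2 => ∑ r, w r * v r = 0)).card = 2 ^ s := by
    have h1 : ∀ w : Fin s → ZMod 2, (∑ r, w r * v r = 0) ↔ ¬ (∑ r, w r * v r = 1) := by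
      intro w
      rcases zmod2_cases (∑ r, w r * v r) with h | h <;> rw [h] <;> simp
    rw [Finset.filter_congr (fun w _ => h1 w), Finset.card_filter_add_card_filter_not]
    rw [Finset.card_univ, Fintype.card_fun]
    simp
  have hs1 : 1 ≤ s := by
    rcases Nat.eq_zero_or_pos s with rfl | h
    · exact absurd (Subsingleton.elim v 0) hv
    · exact h
  have hpow : 2 ^ s = 2 ^ (s - 1) * 2 := by
    rw [← pow_succ, Nat.sub_add_cancel hs1]
  have h2 : 2 * (Finset.univ.filter (fun w : Fin s → ZMod 2 => ∑ r, w r * v r = 1)).card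
      = 2 * 2 ^ (s - 1) := by
    rw [two_mul]
    nth_rewrite 2 [hbij]
    rw [hsplit, hpow]
    ring
  exact Nat.eq_of_mul_eq_mul_left (by norm_num) h2

lemma count_dot (v : Fin s → ZMod 2) :
    (Finset.univ.filter (fun w : Fin s → ZMod 2 => ∑ r, w r * v r = 1)).card
      = if v = 0 then 0 else 2 ^ (s - 1) := by
  rcases eq_or_ne v 0 with rfl | hv
  · rw [if_pos rfl]
    rw [Finset.card_eq_zero, Finset.filter_eq_empty_iff]
    intro w _
    simp
  · rw [if_neg hv]
    exact count_dot_one v hv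

end Count

section Core

variable {s n : ℕ} (G : Matrix (Fin s) (Fin n) (ZMod 2))

/-- dot product of a dual vector `w` with column `h` of `G`. -/
def dotCol (w : Fin s → ZMod 2) (h : Fin n) : ZMod 2 := ∑ r, w r * G r h

/-- number of columns whose dot product with `w` is `1`. -/
def Acard (w : Fin s → ZMod 2) : ℕ :=
  (Finset.univ.filter (fun h => dotCol G w h = 1)).card

lemma Acard_le (w : Fin s → ZMod 2) : Acard G w ≤ n := by
  classical
  calc Acard G w ≤ (Finset.univ : Finset (Fin n)).card := Finset.card_filter_le _ _
  _ = n := by simp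

lemma Acard_zero : Acard G 0 = 0 := by
  rw [Acard, Finset.card_eq_zero, Finset.filter_eq_empty_iff]
  intro h _
  rw [dotCol]
  simp

lemma sum_dotCol {R : Finset (Fin n)} {i : Fin s}
    (hR : (∑ h ∈ R, fun r : Fin s => G r h) = Pi.single i 1) (w : Fin s → ZMod 2) :
    ∑ h ∈ R, dotCol G w h = w i := by
  have hcol : ∀ r, (∑ h ∈ R, G r h) = (Pi.single i 1 : Fin s → ZMod 2) r := by
    intro r
    have := congrFun hR r
    rwa [Finset.sum_apply] at this
  unfold dotCol
  rw [Finset.sum_comm]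
  calc ∑ r, ∑ h ∈ R, w r * G r h = ∑ r, w r * ∑ h ∈ R, G r h := by
        apply Finset.sum_congr rfl
        intro r _
        rw [Finset.mul_sum]
    _ = ∑ r, w r * (Pi.single i 1 : Fin s → ZMod 2) r := by
        apply Finset.sum_congr rfl
        intro r _
        rw [hcol r]
    _ = w i := by
        rw [Finset.sum_eq_single i]
        · simp
        · intro b _ hb; simp [Pi.single_eq_of_ne hb]
        · simp

/-- parity of a recovery set w.r.t. a dual functional. -/
lemma recovery_parity {R : Finset (Fin n)} {i : Fin s}
    (hR : (∑ h ∈ R, fun r : Fin s => G r h) = Pi.single i 1)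
    {w : Fin s → ZMod 2} (hwi : w i = 1) :
    ((R.filter (fun h => dotCol G w h = 1)).card) % 2 = 1 := by
  have hsum : ∑ h ∈ R, dotCol G w h = 1 := by rw [sum_dotCol G hR w, hwi]
  have hcast : ∑ h ∈ R, dotCol G w h
      = ((R.filter (fun h => dotCol G w h = 1)).card : ZMod 2) := by
    rw [← Finset.sum_filter_add_sum_filter_not R (fun h => dotCol G w h = 1)]
    have e1 : ∑ h ∈ R.filter (fun h => dotCol G w h = 1), dotCol G w h
        = ((R.filter (fun h => dotCol G w h = 1)).card : ZMod 2) := by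
      rw [Finset.sum_congr rfl (fun h hh => (Finset.mem_filter.mp hh).2), Finset.sum_const,
        nsmul_eq_mul, mul_one]
    have e2 : ∑ h ∈ R.filter (fun h => ¬ dotCol G w h = 1), dotCol G w h = 0 := by
      apply Finset.sum_eq_zero
      intro h hh
      exact (zmod2_cases (dotCol G w h)).resolve_right (Finset.mem_filter.mp hh).2
    rw [e1, e2, add_zero]
  exact zmod2_natCast_eq_one (hcast ▸ hsum)

/-- Step A: every nonzero functional is 1 on at least k columns. -/
lemma stepA {k : ℕ} (hpir : IsPIRMatrix s n k G) {w : Fin s → ZMod 2} (hw : w ≠ 0) :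
    k ≤ Acard G w := by
  classical
  obtain ⟨i, hi⟩ : ∃ i, w i = 1 := by
    by_contra hc
    push_neg at hc
    exact hw (funext fun r => (zmod2_cases (w r)).resolve_right (hc r))
  obtain ⟨R, hdisj, hsum⟩ := hpir i
  set T : Fin k → Finset (Fin n) := fun j => (R j).filter (fun h => dotCol G w h = 1) with hT
  have hTdisj : ∀ j ∈ (Finset.univ : Finset (Fin k)), ∀ j' ∈ Finset.univ, j ≠ j' →
      Disjoint (T j) (T j') := by
    intro j _ j' _ hjj
    exact Finset.disjoint_filter_filter (hdisj j j' hjj)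
  have hTone : ∀ j, 1 ≤ (T j).card := by
    intro j
    have := recovery_parity G (hsum j) hi
    show 1 ≤ ((R j).filter (fun h => dotCol G w h = 1)).card
    omega
  have hsub : (Finset.univ : Finset (Fin k)).biUnion T
      ⊆ Finset.univ.filter (fun h => dotCol G w h = 1) := by
    intro h hh
    rw [Finset.mem_biUnion] at hh
    obtain ⟨j, _, hj⟩ := hh
    rw [Finset.mem_filter]
    exact ⟨Finset.mem_univ _, (Finset.mem_filter.mp hj).2⟩
  calc k = ∑ _j : Fin k, 1 := by simp
    _ ≤ ∑ j : Fin k, (T j).card := Finset.sum_le_sum (fun j _ => hTone j)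
    _ = ((Finset.univ : Finset (Fin k)).biUnion T).card := (Finset.card_biUnion hTdisj).symm
    _ ≤ Acard G w := Finset.card_le_card hsub

/-- total count over all functionals. -/
lemma sumA :
    ∑ w : Fin s → ZMod 2, Acard G w
      = (Finset.univ.filter (fun h : Fin n => (fun r => G r h) ≠ (0 : Fin s → ZMod 2))).card
          * 2 ^ (s - 1) := by
  classical
  have e1 : ∀ w : Fin s → ZMod 2, Acard G w = ∑ h : Fin n, if dotCol G w h = 1 then 1 else 0 := by
    intro w
    rw [Acard, Finset.card_filter]
  rw [Finset.sum_congr rfl (fun w _ => e1 w), Finset.sum_comm]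
  have e2 : ∀ h : Fin n, (∑ w : Fin s → ZMod 2, if dotCol G w h = 1 then 1 else 0)
      = if (fun r => G r h) = (0 : Fin s → ZMod 2) then 0 else 2 ^ (s - 1) := by
    intro h
    rw [← Finset.card_filter]
    exact count_dot (fun r => G r h)
  rw [Finset.sum_congr rfl (fun h _ => e2 h)]
  rw [Finset.sum_ite, Finset.sum_const, Finset.sum_const]
  simp only [smul_zero, zero_add, smul_eq_mul, ne_eq, mul_zero]

end Core

section Parseval

variable {s n : ℕ} (G : Matrix (Fin s) (Fin n) (ZMod 2))

lemma eps_prod_sum (hs1 : 1 ≤ s) (h h' : Fin n) :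
    (∑ w : Fin s → ZMod 2,
        (if dotCol G w h = 1 then (-1 : ℤ) else 1) * (if dotCol G w h' = 1 then (-1 : ℤ) else 1))
      = if (fun r => G r h) = (fun r : Fin s => G r h') then (2 ^ s : ℤ) else 0 := by
  classical
  set v : Fin s → ZMod 2 := fun r => G r h + G r h' with hv
  have hsum : ∀ w : Fin s → ZMod 2, (∑ r, w r * v r) = dotCol G w h + dotCol G w h' := by
    intro w
    unfold dotCol
    rw [← Finset.sum_add_distrib]
    apply Finset.sum_congr rfl
    intro r _
    rw [hv]
    ring
  have hterm : ∀ w : Fin s → ZMod 2,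
      (if dotCol G w h = 1 then (-1 : ℤ) else 1) * (if dotCol G w h' = 1 then (-1 : ℤ) else 1)
        = if (∑ r, w r * v r) = 1 then (-1 : ℤ) else 1 := by
    intro w
    rw [hsum]
    rcases zmod2_cases (dotCol G w h) with ha | ha <;>
      rcases zmod2_cases (dotCol G w h') with hb | hb <;>
      rw [ha, hb] <;> decide
  rw [Finset.sum_congr rfl (fun w _ => hterm w)]
  have hsplit : ∀ w : Fin s → ZMod 2, (if (∑ r, w r * v r) = 1 then (-1 : ℤ) else 1)
      = 1 - 2 * (if (∑ r, w r * v r) = 1 then (1 : ℤ) else 0) := by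
    intro w; split <;> ring
  rw [Finset.sum_congr rfl (fun w _ => hsplit w), Finset.sum_sub_distrib, Finset.sum_const,
    ← Finset.mul_sum, Finset.sum_boole]
  rw [Finset.card_univ, Fintype.card_fun]
  have hcount := count_dot v
  have hveq : (v = 0) ↔ ((fun r => G r h) = (fun r : Fin s => G r h')) := by
    constructor
    · intro h0
      funext r
      have := congrFun h0 r
      rw [hv] at this
      exact (zmod2_add_eq_zero _ _).mp this
    · intro he
      funext r
      show G r h + G r h' = 0
      have := congrFun he r
      exact (zmod2_add_eq_zero _ _).mpr this
  rcases eq_or_ne v 0 with h0 | h0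
  · rw [if_pos (hveq.mp h0)]
    rw [h0] at hcount
    rw [if_pos rfl] at hcount
    rw [h0]  -- careful: rewrite inside filter
    rw [hcount]
    simp [ZMod.card]
  · rw [if_neg (fun he => h0 (hveq.mpr he))]
    rw [if_neg h0] at hcount
    rw [hcount]
    simp only [ZMod.card, Fintype.card_fin, nsmul_eq_mul, mul_one]
    push_cast
    have hpow : (2 : ℤ) ^ s = 2 ^ (s - 1) * 2 := by
      rw [← pow_succ, Nat.sub_add_cancel hs1]
    rw [hpow]
    ring

lemma parseval (hs1 : 1 ≤ s) :
    ∑ w : Fin s → ZMod 2, ((n : ℤ) - 2 * Acard G w) ^ 2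
      = ∑ h : Fin n, ∑ h' : Fin n,
          (if (fun r => G r h) = (fun r : Fin s => G r h') then (2 ^ s : ℤ) else 0) := by
  classical
  have hF : ∀ w : Fin s → ZMod 2,
      ((n : ℤ) - 2 * Acard G w) = ∑ h : Fin n, (if dotCol G w h = 1 then (-1 : ℤ) else 1) := by
    intro w
    have hx : ∀ h : Fin n, (if dotCol G w h = 1 then (-1 : ℤ) else 1)
        = 1 - 2 * (if dotCol G w h = 1 then (1 : ℤ) else 0) := by
      intro h; split <;> ring
    rw [Finset.sum_congr rfl (fun h _ => hx h), Finset.sum_sub_distrib, Finset.sum_const,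
      ← Finset.mul_sum, Finset.sum_boole]
    rw [Finset.card_univ, Fintype.card_fin]
    rw [Acard]
    push_cast
    ring
  have hsq : ∀ w : Fin s → ZMod 2, ((n : ℤ) - 2 * Acard G w) ^ 2
      = ∑ h : Fin n, ∑ h' : Fin n,
          (if dotCol G w h = 1 then (-1 : ℤ) else 1) * (if dotCol G w h' = 1 then (-1 : ℤ) else 1) := by
    intro w
    rw [sq, hF w, Finset.sum_mul_sum]
  rw [Finset.sum_congr rfl (fun w _ => hsq w)]
  rw [Finset.sum_comm]
  apply Finset.sum_congr rfl
  intro h _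
  rw [Finset.sum_comm]
  apply Finset.sum_congr rfl
  intro h' _
  exact eps_prod_sum G hs1 h h'

end Parseval

section Main

set_option maxHeartbeats 1000000 in
lemma no_pir_aux {s n k : ℕ} (G : Matrix (Fin s) (Fin n) (ZMod 2))
    (hs1 : 1 ≤ s) (hnk : n = 2 * k) (hk4 : 4 ≤ k) (h2s : 2 ^ s = 2 * n)
    (hs2 : 2 ^ (s - 1) = n) (hG : IsPIRMatrix s n k G) : False := by
  classical
  have hn0 : 0 < n := by omega
  -- basic facts
  have hstepA : ∀ w : Fin s → ZMod 2, w ≠ 0 → k ≤ Acard G w :=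
    fun w hw => stepA G hG hw
  have hAle : ∀ w : Fin s → ZMod 2, Acard G w ≤ n := Acard_le G
  have hA0 : Acard G 0 = 0 := Acard_zero G
  set Z : ℕ :=
    (Finset.univ.filter (fun h : Fin n => (fun r => G r h) ≠ (0 : Fin s → ZMod 2))).card with hZ
  have hZle : Z ≤ n := by
    rw [hZ]
    calc (Finset.univ.filter (fun h : Fin n => (fun r => G r h) ≠ (0 : Fin s → ZMod 2))).card
        ≤ (Finset.univ : Finset (Fin n)).card := Finset.card_filter_le _ _
      _ = n := by simp
  have hsumA : ∑ w : Fin s → ZMod 2, Acard G w = Z * n := by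
    rw [sumA G, hs2, hZ]
  have hsumAZ : ∑ w : Fin s → ZMod 2, (Acard G w : ℤ) = (Z : ℤ) * n := by
    rw [← Nat.cast_sum, hsumA]
    push_cast
    ring
  set W : Finset (Fin s → ZMod 2) := Finset.univ.erase 0 with hW
  have hWmem : ∀ w ∈ W, w ≠ (0 : Fin s → ZMod 2) := by
    intro w hw
    exact (Finset.mem_erase.mp hw).1
  have hWcardN : W.card = 2 * n - 1 := by
    rw [hW, Finset.card_erase_of_mem (Finset.mem_univ _), Finset.card_univ, Fintype.card_fun,
      ZMod.card, Fintype.card_fin, h2s]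
  have hWcard : (W.card : ℤ) = 2 * n - 1 := by
    rw [hWcardN, Nat.cast_sub (by omega)]
    push_cast
    ring
  have hWA : ∑ w ∈ W, (Acard G w : ℤ) = (Z : ℤ) * n := by
    rw [hW, Finset.sum_erase _ (by rw [hA0]; norm_num), hsumAZ]
  -- Parseval double sum
  set D : ℤ := ∑ h : Fin n, ∑ h' : Fin n,
      (if (fun r => G r h) = (fun r : Fin s => G r h') then (2 ^ s : ℤ) else 0) with hD
  have hpars : ∑ w : Fin s → ZMod 2, ((n : ℤ) - 2 * Acard G w) ^ 2 = D := by
    rw [hD]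
    exact parseval G hs1
  -- lower bound on D via the diagonal
  have hinner : ∀ h : Fin n, (2 ^ s : ℤ) ≤ ∑ h' : Fin n,
      (if (fun r => G r h) = (fun r : Fin s => G r h') then (2 ^ s : ℤ) else 0) := by
    intro h
    refine le_trans (le_of_eq (if_pos rfl).symm)
      (Finset.single_le_sum (f := fun h' : Fin n =>
        (if (fun r => G r h) = (fun r : Fin s => G r h') then (2 ^ s : ℤ) else 0))
      (fun h' _ => by positivity) (Finset.mem_univ h))
  have hlow : (n : ℤ) * (2 * n) ≤ D := by
    have : ∑ _h : Fin n, (2 ^ s : ℤ) ≤ D := by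
      rw [hD]
      exact Finset.sum_le_sum (fun h _ => hinner h)
    rw [Finset.sum_const, Finset.card_univ, Fintype.card_fin, nsmul_eq_mul] at this
    have h2sZ : (2 ^ s : ℤ) = 2 * n := by exact_mod_cast h2s
    rw [h2sZ] at this
    linarith
  -- split Parseval sum at w = 0
  have hsplitW : ∑ w : Fin s → ZMod 2, ((n : ℤ) - 2 * Acard G w) ^ 2
      = (n : ℤ) ^ 2 + ∑ w ∈ W, ((n : ℤ) - 2 * Acard G w) ^ 2 := by
    rw [hW, ← Finset.add_sum_erase _ (fun w => ((n : ℤ) - 2 * Acard G w) ^ 2)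
      (Finset.mem_univ (0 : Fin s → ZMod 2)), hA0]
    norm_num
  -- per-w upper bound on W
  have hperw : ∀ w ∈ W, ((n : ℤ) - 2 * Acard G w) ^ 2 ≤ (n : ℤ) * (2 * Acard G w - n) := by
    intro w hw
    have h1 : (k : ℤ) ≤ Acard G w := by exact_mod_cast hstepA w (hWmem w hw)
    have h2 : (Acard G w : ℤ) ≤ n := by exact_mod_cast hAle w
    have h3 : (n : ℤ) = 2 * k := by exact_mod_cast hnk
    nlinarith [h1, h2, h3]
  have hWsum : ∑ w ∈ W, ((2 : ℤ) * Acard G w - n) = 2 * ((Z : ℤ) * n) - (2 * n - 1) * n := by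
    rw [Finset.sum_sub_distrib, Finset.sum_const, ← Finset.mul_sum, hWA, nsmul_eq_mul, hWcard]
  have hub : ∑ w ∈ W, ((n : ℤ) - 2 * Acard G w) ^ 2
      ≤ (n : ℤ) * (2 * ((Z : ℤ) * n) - (2 * n - 1) * n) := by
    calc ∑ w ∈ W, ((n : ℤ) - 2 * Acard G w) ^ 2
        ≤ ∑ w ∈ W, (n : ℤ) * (2 * Acard G w - n) := Finset.sum_le_sum hperw
      _ = (n : ℤ) * ∑ w ∈ W, ((2 : ℤ) * Acard G w - n) := by rw [Finset.mul_sum]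
      _ = (n : ℤ) * (2 * ((Z : ℤ) * n) - (2 * n - 1) * n) := by rw [hWsum]
  -- conclude Z = n
  have hZn : Z = n := by
    have hcomb : (n : ℤ) * (2 * n) ≤ (n : ℤ) ^ 2 + (n : ℤ) * (2 * ((Z : ℤ) * n) - (2 * n - 1) * n) := by
      calc (n : ℤ) * (2 * n) ≤ D := hlow
        _ = (n : ℤ) ^ 2 + ∑ w ∈ W, ((n : ℤ) - 2 * Acard G w) ^ 2 := by rw [← hpars, hsplitW]
        _ ≤ _ := by linarith [hub]
    have hnZ : (0 : ℤ) < n := by exact_mod_cast hn0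
    have : (n : ℤ) ≤ Z := by nlinarith [hcomb, hnZ]
    have : n ≤ Z := by exact_mod_cast this
    omega
  -- with Z = n, everything is tight
  have hWsum' : ∑ w ∈ W, ((2 : ℤ) * Acard G w - n) = n := by
    rw [hWsum, hZn]
    ring
  have hWF : ∑ w ∈ W, ((n : ℤ) - 2 * Acard G w) ^ 2 = (n : ℤ) * n := by
    have hle : ∑ w ∈ W, ((n : ℤ) - 2 * Acard G w) ^ 2 ≤ (n : ℤ) * n := by
      calc ∑ w ∈ W, ((n : ℤ) - 2 * Acard G w) ^ 2
          ≤ ∑ w ∈ W, (n : ℤ) * (2 * Acard G w - n) := Finset.sum_le_sum hperw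
        _ = (n : ℤ) * ∑ w ∈ W, ((2 : ℤ) * Acard G w - n) := by rw [Finset.mul_sum]
        _ = (n : ℤ) * n := by rw [hWsum']
    have hge : (n : ℤ) * n ≤ ∑ w ∈ W, ((n : ℤ) - 2 * Acard G w) ^ 2 := by
      have := hlow
      rw [← hpars, hsplitW] at this
      nlinarith [this]
    linarith
  have hDval : D = 2 * (n : ℤ) * n := by
    rw [← hpars, hsplitW, hWF]
    ring
  -- columns are pairwise distinct
  have hinj : ∀ h h' : Fin n, (fun r => G r h) = (fun r : Fin s => G r h') → h = h' := by
    intro h h' he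
    by_contra hne
    have hbig : (2 ^ s : ℤ) + 2 ^ s ≤ ∑ h'' : Fin n,
        (if (fun r => G r h) = (fun r : Fin s => G r h'') then (2 ^ s : ℤ) else 0) := by
      have hsub : ({h, h'} : Finset (Fin n)) ⊆ Finset.univ := Finset.subset_univ _
      have := Finset.sum_le_sum_of_subset_of_nonneg hsub
        (f := fun h'' : Fin n =>
          (if (fun r => G r h) = (fun r : Fin s => G r h'') then (2 ^ s : ℤ) else 0))
        (fun h'' _ _ => by positivity)
      rw [Finset.sum_pair hne, if_pos rfl, if_pos he] at this
      exact this
    have hstrict : (n : ℤ) * (2 ^ s) < D := by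
      rw [hD]
      have h2pos : (0 : ℤ) < 2 ^ s := by positivity
      have := Finset.sum_lt_sum (s := (Finset.univ : Finset (Fin n)))
        (f := fun _h : Fin n => (2 ^ s : ℤ))
        (g := fun h'' : Fin n => ∑ h' : Fin n,
          (if (fun r => G r h'') = (fun r : Fin s => G r h') then (2 ^ s : ℤ) else 0))
        (fun i _ => hinner i) ⟨h, Finset.mem_univ h, by linarith [hbig]⟩
      rw [Finset.sum_const, Finset.card_univ, Fintype.card_fin, nsmul_eq_mul] at this
      exact this
    have h2sZ : (2 ^ s : ℤ) = 2 * n := by exact_mod_cast h2s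
    rw [h2sZ, hDval] at hstrict
    nlinarith [hstrict]
  -- every w ∈ W has Acard = k or Acard = n
  have hdichot : ∀ w ∈ W, Acard G w = k ∨ Acard G w = n := by
    have hzero : ∑ w ∈ W, ((n : ℤ) * (2 * Acard G w - n) - ((n : ℤ) - 2 * Acard G w) ^ 2) = 0 := by
      rw [Finset.sum_sub_distrib, hWF, ← Finset.mul_sum, hWsum']
      ring
    have hnonneg : ∀ w ∈ W, (0 : ℤ) ≤ (n : ℤ) * (2 * Acard G w - n) - ((n : ℤ) - 2 * Acard G w) ^ 2 :=
      fun w hw => by linarith [hperw w hw]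
    have heach := (Finset.sum_eq_zero_iff_of_nonneg hnonneg).mp hzero
    intro w hw
    have hw0 := heach w hw
    have h3 : (n : ℤ) = 2 * k := by exact_mod_cast hnk
    have h1 : (k : ℤ) ≤ Acard G w := by exact_mod_cast hstepA w (hWmem w hw)
    have h2 : (Acard G w : ℤ) ≤ n := by exact_mod_cast hAle w
    have hfact : ((2 : ℤ) * Acard G w - n) * ((2 : ℤ) * n - 2 * Acard G w) = 0 := by nlinarith [hw0]
    rcases mul_eq_zero.mp hfact with hc | hc
    · left
      have : (Acard G w : ℤ) = k := by linarith [hc, h3]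
      exact_mod_cast this
    · right
      have : (Acard G w : ℤ) = n := by linarith [hc]
      exact_mod_cast this
  -- find w0 with Acard = n
  obtain ⟨w0, hw0W, hw0n⟩ : ∃ w0 ∈ W, Acard G w0 = n := by
    by_contra hc
    push_neg at hc
    have hallk : ∀ w ∈ W, Acard G w = k := by
      intro w hw
      rcases hdichot w hw with h | h
      · exact h
      · exact absurd h (hc w hw)
    have : ∑ w ∈ W, ((2 : ℤ) * Acard G w - n) = 0 := by
      apply Finset.sum_eq_zero
      intro w hw
      rw [hallk w hw]
      have h3 : (n : ℤ) = 2 * k := by exact_mod_cast hnk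
      linarith [h3]
    rw [hWsum'] at this
    have : n = 0 := by exact_mod_cast this
    omega
  -- all columns dot to 1 against w0
  have hall : ∀ h : Fin n, dotCol G w0 h = 1 := by
    have hcardeq : (Finset.univ.filter (fun h : Fin n => dotCol G w0 h = 1)).card
        = Fintype.card (Fin n) := by
      rw [Fintype.card_fin]
      exact hw0n
    have huniv := Finset.eq_univ_of_card _ hcardeq
    intro h
    have : h ∈ Finset.univ.filter (fun h : Fin n => dotCol G w0 h = 1) := by
      rw [huniv]; exact Finset.mem_univ h
    exact (Finset.mem_filter.mp this).2
  -- final combinatorial step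
  obtain ⟨i, hi⟩ : ∃ i, w0 i = 1 := by
    by_contra hc
    push_neg at hc
    exact (hWmem w0 hw0W)
      (funext fun r => (zmod2_cases (w0 r)).resolve_right (hc r))
  obtain ⟨R, hdisj, hsumR⟩ := hG i
  have hodd : ∀ j : Fin k, (R j).card % 2 = 1 := by
    intro j
    have h1 : (R j).filter (fun h => dotCol G w0 h = 1) = R j :=
      Finset.filter_true_of_mem (fun h _ => hall h)
    have := recovery_parity G (hsumR j) hi
    rwa [h1] at this
  set J1 : Finset (Fin k) := Finset.univ.filter (fun j => (R j).card = 1) with hJ1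
  have hJ1card : J1.card ≤ 1 := by
    rw [Finset.card_le_one]
    intro j hj j' hj'
    by_contra hne
    obtain ⟨a, ha⟩ := Finset.card_eq_one.mp (Finset.mem_filter.mp hj).2
    obtain ⟨a', ha'⟩ := Finset.card_eq_one.mp (Finset.mem_filter.mp hj').2
    have hcola : (fun r : Fin s => G r a) = Pi.single i 1 := by
      have := hsumR j
      rwa [ha, Finset.sum_singleton] at this
    have hcola' : (fun r : Fin s => G r a') = Pi.single i 1 := by
      have := hsumR j'
      rwa [ha', Finset.sum_singleton] at this
    have haa : a = a' := hinj a a' (hcola.trans hcola'.symm)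
    have hd := hdisj j j' hne
    rw [ha, ha', ← haa] at hd
    exact (Finset.disjoint_left.mp hd (Finset.mem_singleton_self a)) (Finset.mem_singleton_self a)
  have hsumcard : ∑ j : Fin k, (R j).card ≤ n := by
    rw [← Finset.card_biUnion (fun j _ j' _ hjj => hdisj j j' hjj)]
    calc ((Finset.univ : Finset (Fin k)).biUnion R).card
        ≤ (Finset.univ : Finset (Fin n)).card := Finset.card_le_card (Finset.subset_univ _)
      _ = n := by simp
  have hsplit2 : ∑ j ∈ J1, (R j).card + ∑ j ∈ Finset.univ.filter (fun j => ¬ (R j).card = 1),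
      (R j).card = ∑ j : Fin k, (R j).card := by
    rw [hJ1]
    exact Finset.sum_filter_add_sum_filter_not _ _ _
  have hsum1 : ∑ j ∈ J1, (R j).card = J1.card := by
    rw [hJ1]
    rw [Finset.sum_congr rfl (fun j hj => (Finset.mem_filter.mp hj).2)]
    rw [Finset.sum_const, smul_eq_mul, mul_one]
  have hge3 : ∀ j ∈ Finset.univ.filter (fun j => ¬ (R j).card = 1), 3 ≤ (R j).card := by
    intro j hj
    have h1 := (Finset.mem_filter.mp hj).2
    have h2 := hodd j
    omega
  have hsum3 : 3 * (Finset.univ.filter (fun j => ¬ (R j).card = 1)).card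
      ≤ ∑ j ∈ Finset.univ.filter (fun j => ¬ (R j).card = 1), (R j).card := by
    calc 3 * (Finset.univ.filter (fun j => ¬ (R j).card = 1)).card
        = (Finset.univ.filter (fun j => ¬ (R j).card = 1)).card • 3 := by
          rw [smul_eq_mul]; ring
      _ ≤ _ := Finset.card_nsmul_le_sum _ _ _ hge3
  have hcards : J1.card + (Finset.univ.filter (fun j => ¬ (R j).card = 1)).card = k := by
    rw [hJ1, Finset.card_filter_add_card_filter_not, Finset.card_univ, Fintype.card_fin]
  omega

end Main

lemma no_pir (s : ℕ) (hs : 4 ≤ s) (G : Matrix (Fin s) (Fin (2 ^ (s - 1))) (ZMod 2)) :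
    ¬ IsPIRMatrix s (2 ^ (s - 1)) (2 ^ (s - 2)) G := by
  intro hG
  refine no_pir_aux G (by omega) ?_ ?_ ?_ rfl hG
  · rw [← pow_succ']
    congr 1
    omega
  · calc 4 = 2 ^ 2 := rfl
      _ ≤ 2 ^ (s - 2) := Nat.pow_le_pow_right (by norm_num) (by omega)
  · rw [← pow_succ']
    congr 1
    omega

/-- padding with zero columns preserves the PIR property. -/
lemma pir_mono {s n N k : ℕ} (hnN : n ≤ N)
    (h : ∃ G : Matrix (Fin s) (Fin n) (ZMod 2), IsPIRMatrix s n k G) :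
    ∃ G : Matrix (Fin s) (Fin N) (ZMod 2), IsPIRMatrix s N k G := by
  classical
  obtain ⟨G, hG⟩ := h
  refine ⟨fun r c => if hc : (c : ℕ) < n then G r ⟨c, hc⟩ else 0, ?_⟩
  intro i
  obtain ⟨R, hdisj, hsum⟩ := hG i
  refine ⟨fun j => (R j).map (Fin.castLEEmb hnN), ?_, ?_⟩
  · intro j j' hjj
    exact (Finset.disjoint_map _).mpr (hdisj j j' hjj)
  · intro j
    rw [Finset.sum_map]
    rw [← hsum j]
    apply Finset.sum_congr rfl
    intro c _
    funext r
    have hc : ((Fin.castLEEmb hnN c : Fin N) : ℕ) < n := by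
      simpa [Fin.castLEEmb] using c.isLt
    simp only [dif_pos hc]
    congr 1

/-- existence of some PIR matrix (k identity blocks side by side). -/
lemma pir_exists (s k : ℕ) (hs : 1 ≤ s) (hk : 1 ≤ k) :
    ∃ G : Matrix (Fin s) (Fin (k * s)) (ZMod 2), IsPIRMatrix s (k * s) k G := by
  classical
  refine ⟨fun r c => if (c : ℕ) % s = (r : ℕ) then 1 else 0, ?_⟩
  intro i
  have hcol : ∀ j : Fin k, (j : ℕ) * s + (i : ℕ) < k * s := by
    intro j
    have hj : (j : ℕ) < k := j.isLt
    have hi : (i : ℕ) < s := i.isLt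
    calc (j : ℕ) * s + (i : ℕ) < (j : ℕ) * s + s := by omega
      _ = ((j : ℕ) + 1) * s := by ring
      _ ≤ k * s := Nat.mul_le_mul_right s (by omega)
  refine ⟨fun j => {⟨(j : ℕ) * s + (i : ℕ), hcol j⟩}, ?_, ?_⟩
  · intro j j' hjj
    rw [Finset.disjoint_singleton]
    intro he
    apply hjj
    have := congrArg (fun x : Fin (k * s) => (x : ℕ)) he
    simp only at this
    have hi : (i : ℕ) < s := i.isLt
    have : (j : ℕ) = (j' : ℕ) := by
      have h1 : (j : ℕ) * s + (i : ℕ) = (j' : ℕ) * s + (i : ℕ) := this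
      have h2 : (j : ℕ) * s = (j' : ℕ) * s := by omega
      exact Nat.eq_of_mul_eq_mul_right (by omega) h2
    exact Fin.ext this
  · intro j
    rw [Finset.sum_singleton]
    funext r
    have hmod : ((j : ℕ) * s + (i : ℕ)) % s = (i : ℕ) := by
      rw [Nat.mul_comm, Nat.mul_add_mod, Nat.mod_eq_of_lt i.isLt]
    simp only [hmod]
    rw [Pi.single_apply]
    by_cases hri : r = i
    · rw [if_pos (by rw [hri]), if_pos hri]
    · rw [if_neg (fun hc => hri (Fin.ext hc).symm), if_neg hri]


/-- For every `s ≥ 4` one has `P(s, 2^{s-2}) ≥ 2^{s-1} + 1`: no `s × 2^{s-1}`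
matrix over `𝔽₂` is a `2^{s-2}`-PIR generator matrix. -/
theorem stmt_9 (s : ℕ) (hs : 4 ≤ s) :
    2 ^ (s - 1) + 1 ≤ PIRlen s (2 ^ (s - 2)) ∧
    ∀ G : Matrix (Fin s) (Fin (2 ^ (s - 1))) (ZMod 2),
      ¬ IsPIRMatrix s (2 ^ (s - 1)) (2 ^ (s - 2)) G := by
  constructor
  · rw [PIRlen]
    apply le_csInf
    · refine ⟨2 ^ (s - 2) * s, ?_, ?_⟩
      · have : 1 ≤ 2 ^ (s - 2) := Nat.one_le_two_pow
        have : 1 ≤ s := by omega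
        positivity
      · exact pir_exists s (2 ^ (s - 2)) (by omega) Nat.one_le_two_pow
    · rintro b ⟨hb0, G, hG⟩
      by_contra hlt
      push_neg at hlt
      have hble : b ≤ 2 ^ (s - 1) := by omega
      have := pir_mono hble ⟨G, hG⟩
      obtain ⟨G', hG'⟩ := this
      exact no_pir s hs G' hG'
  · exact fun G => no_pir s hs G
end

section
/- P(12,8) ≥ 25; that is, no 12-by-24 matrix over F_2 is an 8-PIR generator matrix (and hence no 12-by-n matrix with n ≤ 24 is one). -/
/-!
For `x ≠ 0` pick `i` with `x i = 1`. Each of the `8` disjoint recovery sets of `i` sums `x ᵥ* G` to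
`x i`, so it meets the support of `x ᵥ* G`: the rows of `G` span a binary code of minimum weight at
least `8`. Two recovery sets of `e₀` have at most `6` columns together, and their union `S` is the
support of a dual codeword. Shortening on a `6`-set `W ⊇ S` therefore costs only `5` dimensions (a
codeword vanishing on `W` minus one point of `S` also vanishes at that point), leaving a code of
length at most `18`, dimension `7` and minimum weight `8`. There is no such code: if every nonzero
weight is at least `12` the Plotkin average-weight bound fails, and otherwise the residual code of
a word of weight `w ≤ 11` has dimension `6`, length `18 - w` and minimum weight `4` (if `w ≤ 9`) or
`3`, against the Hamming bound.
-/

open Finset Matrix Module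

section HammingWeight

variable {ι : Type*} [Fintype ι]

theorem hammingNorm_subtype {β : Type*} [Zero β] [DecidableEq β] (p : ι → Prop) [DecidablePred p]
    (v : ι → β) : hammingNorm (fun i : Subtype p => v i) = #{i | p i ∧ v i ≠ 0} := by
  rw [hammingNorm, ← card_map (Function.Embedding.subtype p)]
  congr 1
  ext i
  simp [and_comm]

theorem hammingNorm_subtype_of_forall {β : Type*} [Zero β] [DecidableEq β] {p : ι → Prop}
    [DecidablePred p] {v : ι → β} (hv : ∀ i, ¬ p i → v i = 0) :
    hammingNorm (fun i : Subtype p => v i) = hammingNorm v := by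
  rw [hammingNorm_subtype, hammingNorm]
  congr 1
  ext i
  simpa using fun hi => by_contra fun hp => hi (hv i hp)

theorem hammingNorm_le_hammingNorm_subtype_ne_add_one {β : Type*} [Zero β] [DecidableEq β]
    [DecidableEq ι] (v : ι → β) (a : ι) :
    hammingNorm v ≤ hammingNorm (fun i : {i // i ≠ a} => v i) + 1 := by
  rw [hammingNorm_subtype, hammingNorm]
  have : ({i | i ≠ a ∧ v i ≠ 0} : Finset ι) = ({i | v i ≠ 0} : Finset ι).erase a := by
    ext i
    simp
  rw [this]
  have := pred_card_le_card_erase (s := ({i | v i ≠ 0} : Finset ι)) (a := a)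
  omega

theorem hammingNorm_add_hammingNorm_add (c c₀ : ι → ZMod 2) :
    hammingNorm c + hammingNorm (c + c₀) =
      hammingNorm c₀ + 2 * hammingNorm (fun i : {i // c₀ i = 0} => c i) := by
  rw [hammingNorm_subtype]
  simp only [hammingNorm, card_filter, Pi.add_apply, ← sum_add_distrib, mul_sum]
  have key : ∀ a b : ZMod 2, ((if a ≠ 0 then 1 else 0) + if a + b ≠ 0 then 1 else 0 : ℕ) =
      (if b ≠ 0 then 1 else 0) + 2 * if b = 0 ∧ a ≠ 0 then 1 else 0 := by decide
  exact sum_congr rfl fun i _ => key (c i) (c₀ i)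

end HammingWeight

theorem two_pow_le_natCard {M : Type*} [AddCommGroup M] [Module (ZMod 2) M]
    [Module.Finite (ZMod 2) M] {k : ℕ} (hk : k ≤ finrank (ZMod 2) M) : 2 ^ k ≤ Nat.card M := by
  rw [natCard_eq_pow_finrank (K := ZMod 2), Nat.card_zmod]
  exact Nat.pow_le_pow_right two_pos hk

theorem two_mul_card_filter_ne_zero_le {V : Type*} [AddCommGroup V] [Fintype V]
    (ℓ : V →+ ZMod 2) : 2 * #{v | ℓ v ≠ 0} ≤ Fintype.card V := by
  classical
  have hsplit := card_filter_add_card_filter_not (s := univ) (fun v => ℓ v ≠ 0)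
  simp only [not_not, card_univ] at hsplit
  by_cases h : ∃ v₁, ℓ v₁ ≠ 0
  · obtain ⟨v₁, hv₁⟩ := h
    have hodd : ∀ a b : ZMod 2, a ≠ 0 → b ≠ 0 → a + b = 0 := by decide
    have : #{v | ℓ v ≠ 0} ≤ #{v | ℓ v = 0} :=
      card_le_card_of_injOn (· + v₁)
        (fun v hv => by simpa using hodd _ _ (mem_filter.1 hv).2 hv₁)
        (add_left_injective v₁).injOn
    omega
  · push Not at h
    simp [h]

namespace Submodule

variable {ι : Type*} [Fintype ι] {d : ℕ}

theorem two_mul_natCard_sub_one_mul_le (C : Submodule (ZMod 2) (ι → ZMod 2))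
    (hC : ∀ c ∈ C, c ≠ 0 → d ≤ hammingNorm c) :
    2 * ((Nat.card C - 1) * d) ≤ Fintype.card ι * Nat.card C := by
  classical
  rw [Nat.card_eq_fintype_card]
  have hlow : (Fintype.card C - 1) * d ≤ ∑ c : C, hammingNorm (c : ι → ZMod 2) :=
    calc (Fintype.card C - 1) * d = ∑ _c ∈ univ.erase (0 : C), d := by
          rw [sum_const, card_erase_of_mem (mem_univ _), card_univ, smul_eq_mul]
      _ ≤ ∑ c ∈ univ.erase (0 : C), hammingNorm (c : ι → ZMod 2) :=
          sum_le_sum fun c hc => hC c c.2 (by simpa using ne_of_mem_erase hc)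
      _ ≤ _ := sum_le_sum_of_subset (erase_subset _ _)
  have hswap : ∑ c : C, hammingNorm (c : ι → ZMod 2) = ∑ i, #{c : C | (c : ι → ZMod 2) i ≠ 0} := by
    simp only [hammingNorm, card_filter]
    exact sum_comm
  calc 2 * ((Fintype.card C - 1) * d) ≤ ∑ i, 2 * #{c : C | (c : ι → ZMod 2) i ≠ 0} := by
        rw [← mul_sum, ← hswap]
        omega
    _ ≤ ∑ _i : ι, Fintype.card C := sum_le_sum fun i _ =>
        two_mul_card_filter_ne_zero_le (LinearMap.proj i ∘ₗ C.subtype).toAddMonoidHom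
    _ = Fintype.card ι * Fintype.card C := by simp

end Submodule

/-- An `[n, k, d]` binary linear code with `n = card ι` exists; `k` and `d` are lower bounds. -/
def HasBinaryCode (ι : Type*) [Fintype ι] (k d : ℕ) : Prop :=
  ∃ C : Submodule (ZMod 2) (ι → ZMod 2), k ≤ finrank (ZMod 2) C ∧
    ∀ c ∈ C, c ≠ 0 → d ≤ hammingNorm c

namespace HasBinaryCode

variable {ι : Type*} [Fintype ι] {k d : ℕ}

theorem of_linearMap {M : Type*} [AddCommGroup M] [Module (ZMod 2) M]
    (f : M →ₗ[ZMod 2] ι → ZMod 2) (V : Submodule (ZMod 2) M) (hd : 0 < d)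
    (hk : k ≤ finrank (ZMod 2) V) (hw : ∀ v ∈ V, v ≠ 0 → d ≤ hammingNorm (f v)) :
    HasBinaryCode ι k d := by
  have hinj : Function.Injective (f ∘ₗ V.subtype) := by
    rw [← LinearMap.ker_eq_bot, LinearMap.ker_eq_bot']
    rintro ⟨v, hv⟩ hfv
    by_contra hne
    have := hw v hv (by simpa using hne)
    simp_all
  refine ⟨LinearMap.range (f ∘ₗ V.subtype), by rwa [LinearMap.finrank_range_of_inj hinj], ?_⟩
  rintro _ ⟨⟨v, hv⟩, rfl⟩ hne
  exact hw v hv (by rintro rfl; simp at hne)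

theorem le_card (h : HasBinaryCode ι k d) : k ≤ Fintype.card ι := by
  obtain ⟨C, hk, -⟩ := h
  exact hk.trans ((Submodule.finrank_le C).trans (finrank_fintype_fun_eq_card (ZMod 2)).le)

theorem puncture [DecidableEq ι] (h : HasBinaryCode ι k (d + 1)) (a : ι) (hd : 0 < d) :
    HasBinaryCode {i // i ≠ a} k d := by
  obtain ⟨C, hk, hC⟩ := h
  refine of_linearMap (LinearMap.funLeft _ _ Subtype.val) C hd hk fun c hc hne => ?_
  have := hC c hc hne
  have := hammingNorm_le_hammingNorm_subtype_ne_add_one c a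
  exact Nat.le_of_add_le_add_right (this.trans' ‹_›)

theorem residual {C : Submodule (ZMod 2) (ι → ZMod 2)} (hC : ∀ c ∈ C, c ≠ 0 → d ≤ hammingNorm c)
    {c₀ : ι → ZMod 2} (hc₀C : c₀ ∈ C) (hc₀ : c₀ ≠ 0) {e : ℕ} (he : 0 < e)
    (hw : 2 * e + hammingNorm c₀ ≤ 2 * d + 1) (hk : k + 1 ≤ finrank (ZMod 2) C) :
    HasBinaryCode {i // c₀ i = 0} k e := by
  set g := LinearMap.funLeft (ZMod 2) (ZMod 2) (Subtype.val : {i // c₀ i = 0} → ι) ∘ₗ C.subtype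
  have hweight : ∀ c ∈ C, c ≠ 0 → c ≠ c₀ → e ≤ hammingNorm (fun i : {i // c₀ i = 0} => c i) := by
    intro c hc h0 h1
    have := hammingNorm_add_hammingNorm_add c c₀
    have := hC c hc h0
    have := hC (c + c₀) (C.add_mem hc hc₀C) (by rwa [← ZModModule.sub_eq_add, sub_ne_zero])
    omega
  have hker : LinearMap.ker g ≤ (ZMod 2) ∙ ⟨c₀, hc₀C⟩ := by
    rintro ⟨c, hc⟩ hgc
    by_cases h0 : c = 0
    · subst h0
      exact Submodule.zero_mem _
    by_cases h1 : c = c₀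
    · subst h1
      exact Submodule.mem_span_singleton_self _
    have := hweight c hc h0 h1
    have hzero : (fun i : {i // c₀ i = 0} => c i) = 0 := LinearMap.mem_ker.1 hgc
    simp [hzero] at this
    omega
  refine ⟨LinearMap.range g, ?_, ?_⟩
  · have := LinearMap.finrank_range_add_finrank_ker g
    have := (Submodule.finrank_mono hker).trans
      (finrank_span_singleton (by simpa using hc₀ : (⟨c₀, hc₀C⟩ : C) ≠ 0)).le
    omega
  · rintro _ ⟨⟨c, hc⟩, rfl⟩ hne
    refine hweight c hc (by rintro rfl; exact hne (map_zero g)) ?_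
    rintro rfl
    exact hne (funext fun i => i.2)

theorem shorten_of_sum_eq_zero {M : Type*} [DecidableEq ι] [AddCommGroup M] [Module (ZMod 2) M]
    [FiniteDimensional (ZMod 2) M]
    (f : M →ₗ[ZMod 2] ι → ZMod 2) (hd : 0 < d) (hw : ∀ x, x ≠ 0 → d ≤ hammingNorm (f x))
    {S W : Finset ι} (hSW : S ⊆ W) (hS : S.Nonempty) (hdual : ∀ x, ∑ i ∈ S, f x i = 0)
    (hk : k + #W ≤ finrank (ZMod 2) M + 1) : HasBinaryCode {i // i ∉ W} k d := by
  obtain ⟨i₀, hi₀⟩ := hS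
  set g := LinearMap.funLeft (ZMod 2) (ZMod 2) (Subtype.val : W.erase i₀ → ι) ∘ₗ f
  have hvanish : ∀ x ∈ LinearMap.ker g, ∀ i ∈ W, f x i = 0 := by
    intro x hx
    have hU : ∀ i ∈ W.erase i₀, f x i = 0 := fun i hi => congrFun (LinearMap.mem_ker.1 hx) ⟨i, hi⟩
    have hi₀x : f x i₀ = 0 := by
      rw [← hdual x, ← add_sum_erase S _ hi₀,
        sum_eq_zero fun i hi => hU i (erase_subset_erase _ hSW hi), add_zero]
    intro i hi
    by_cases h : i = i₀
    · exact h ▸ hi₀x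
    · exact hU i (mem_erase.2 ⟨h, hi⟩)
  refine of_linearMap (LinearMap.funLeft _ _ Subtype.val ∘ₗ f) (LinearMap.ker g) hd ?_
    fun x hx hne => ?_
  · have := LinearMap.finrank_range_add_finrank_ker g
    have := Submodule.finrank_le (LinearMap.range g)
    rw [finrank_fintype_fun_eq_card, Fintype.card_coe, card_erase_of_mem (hSW hi₀)] at this
    have := card_pos.2 ⟨i₀, hSW hi₀⟩
    omega
  · have := hammingNorm_subtype_of_forall (p := (· ∉ W)) fun i hi =>
      hvanish x hx i (not_not.1 hi)
    exact (hw x hne).trans this.ge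

theorem two_pow_mul_card_succ_le (h : HasBinaryCode ι k 3) :
    2 ^ k * (Fintype.card ι + 1) ≤ 2 ^ Fintype.card ι := by
  classical
  obtain ⟨C, hk, hC⟩ := h
  let u : Option ι → ι → ZMod 2 := fun o => o.elim 0 (Pi.single · 1)
  have hu : ∀ o, hammingNorm (u o) ≤ 1 := by
    rintro (_ | i)
    · simp [u]
    · refine card_le_one.2 fun a ha b hb => ?_
      simp only [u, Option.elim_some, mem_filter, Pi.single_apply] at ha hb
      aesop
  have hu_inj : Function.Injective u := by
    rintro (_ | i) (_ | j) h
    · rfl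
    · simpa [u] using congrFun h j
    · simpa [u] using congrFun h i
    · simpa [u, Pi.single_apply, eq_comm] using congrFun h i
  have hinj : Function.Injective fun p : C × Option ι => (p.1 : ι → ZMod 2) + u p.2 := by
    rintro ⟨c, o⟩ ⟨c', o'⟩ h
    simp only at h
    have hcc' : c = c' := by
      by_contra hne
      have h3 := hC (c - c') (sub_mem c.2 c'.2) (sub_ne_zero.2 (Subtype.coe_injective.ne hne))
      have hdiff : (c - c' : ι → ZMod 2) = -u o + u o' := by linear_combination h
      rw [hdiff, ← hammingDist_eq_hammingNorm] at h3
      have := hammingDist_triangle (u o) 0 (u o')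
      simp only [hammingDist_zero_right, hammingDist_zero_left] at this
      linarith [hu o, hu o']
    subst hcc'
    exact Prod.ext rfl (hu_inj (add_left_cancel h))
  have := Nat.card_le_card_of_injective _ hinj
  rw [Nat.card_prod, Finite.card_option, Nat.card_fun, Nat.card_zmod,
    Nat.card_eq_fintype_card (α := ι)] at this
  exact (Nat.mul_le_mul_right _ (two_pow_le_natCard hk)).trans this

theorem two_pow_succ_mul_card_le (h : HasBinaryCode ι k 4) :
    2 ^ (k + 1) * Fintype.card ι ≤ 2 ^ Fintype.card ι := by
  classical
  rcases isEmpty_or_nonempty ι with hι | ⟨⟨a⟩⟩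
  · simp
  have := (h.puncture a three_pos).two_pow_mul_card_succ_le
  rw [Fintype.card_subtype_compl, Fintype.card_subtype_eq] at this
  obtain ⟨m, hm⟩ := Nat.exists_eq_succ_of_ne_zero (Fintype.card_pos_iff.2 ⟨a⟩).ne'
  rw [hm, Nat.succ_sub_one] at this
  rw [hm, pow_succ, pow_succ]
  nlinarith

end HasBinaryCode

theorem not_hasBinaryCode_seven_eight {ι : Type*} [Fintype ι] (hι : Fintype.card ι ≤ 18) :
    ¬ HasBinaryCode ι 7 8 := by
  rintro ⟨C, hk, hC⟩
  by_cases hheavy : ∀ c ∈ C, c ≠ 0 → 12 ≤ hammingNorm c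
  · have := C.two_mul_natCard_sub_one_mul_le hheavy
    have := two_pow_le_natCard hk
    have := Nat.mul_le_mul_right (Nat.card C) hι
    omega
  push Not at hheavy
  obtain ⟨c₀, hc₀C, hc₀, hlight⟩ := hheavy
  have hc₀8 := hC c₀ hc₀C hc₀
  have hcard : Fintype.card {i // c₀ i = 0} + hammingNorm c₀ = Fintype.card ι := by
    rw [Fintype.card_subtype, hammingNorm]
    exact card_filter_add_card_filter_not _
  rcases Nat.lt_or_ge (hammingNorm c₀) 10 with hw | hw
  · have hres := HasBinaryCode.residual hC hc₀C hc₀ (k := 6) (e := 4) four_pos (by omega) hk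
    have hbound := hres.two_pow_succ_mul_card_le
    have hlen := hres.le_card
    have hm : Fintype.card {i // c₀ i = 0} ≤ 10 := by omega
    generalize Fintype.card {i // c₀ i = 0} = m at *
    interval_cases m <;> omega
  · have hres := HasBinaryCode.residual hC hc₀C hc₀ (k := 6) (e := 3) three_pos (by omega) hk
    have hbound := hres.two_pow_mul_card_succ_le
    have hm : Fintype.card {i // c₀ i = 0} ≤ 8 := by omega
    generalize Fintype.card {i // c₀ i = 0} = m at *
    interval_cases m <;> omega

theorem exists_ne_mul_add_le_two_mul_sum {α : Type*} [Fintype α] [DecidableEq α] (f : α → ℕ)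
    (hα : 2 ≤ Fintype.card α) :
    ∃ a b, a ≠ b ∧ Fintype.card α * (f a + f b) ≤ 2 * ∑ i, f i := by
  obtain ⟨a, -, ha⟩ := exists_min_image univ f (card_pos.1 (by simp; omega))
  obtain ⟨b, hb, hb'⟩ := exists_min_image (univ.erase a) f
    (card_pos.1 (by rw [card_erase_of_mem (mem_univ a), card_univ]; omega))
  refine ⟨a, b, (ne_of_mem_erase hb).symm, ?_⟩
  have h1 : Fintype.card α * f a ≤ ∑ i, f i := by
    simpa using card_nsmul_le_sum univ f (f a) fun i _ => ha i (mem_univ i)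
  have h2 : f a + (Fintype.card α - 1) * f b ≤ ∑ i, f i :=
    calc f a + (Fintype.card α - 1) * f b ≤ f a + ∑ i ∈ univ.erase a, f i := by
          gcongr
          simpa [card_erase_of_mem] using card_nsmul_le_sum (univ.erase a) f (f b) hb'
      _ = ∑ i, f i := add_sum_erase _ _ (mem_univ a)
  obtain ⟨m, hm⟩ : ∃ m, Fintype.card α = m + 2 := ⟨_, (Nat.sub_add_cancel hα).symm⟩
  rw [hm] at h1 h2 ⊢
  rw [show m + 2 - 1 = m + 1 by omega] at h2
  nlinarith

theorem sum_vecMul_of_sum_eq_single {m n α : Type*} [Fintype m] [DecidableEq m] [CommSemiring α]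
    {G : Matrix m n α} {R : Finset n} {i : m} (h : (∑ h ∈ R, fun r => G r h) = Pi.single i 1)
    (x : m → α) : ∑ h ∈ R, (x ᵥ* G) h = x i := by
  rw [← dotProduct_single_one x i, ← h, dotProduct_sum]
  rfl

theorem IsPIRMatrix.le_hammingNorm_vecMul {s n k : ℕ} {G : Matrix (Fin s) (Fin n) (ZMod 2)}
    (hG : IsPIRMatrix s n k G) {x : Fin s → ZMod 2} (hx : x ≠ 0) : k ≤ hammingNorm (x ᵥ* G) := by
  obtain ⟨i, hi⟩ := Function.ne_iff.mp hx
  obtain ⟨R, hdisj, hsum⟩ := hG i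
  have hhit : ∀ j, ∃ h ∈ R j, (x ᵥ* G) h ≠ 0 := by
    intro j
    by_contra! hzero
    exact hi ((sum_vecMul_of_sum_eq_single (hsum j) x).symm.trans (sum_eq_zero hzero))
  choose g hgR hg using hhit
  calc k = #(univ : Finset (Fin k)) := by simp
    _ ≤ #{h | (x ᵥ* G) h ≠ 0} :=
      card_le_card_of_injOn g (fun j _ => by simpa using hg j) fun j _ j' _ hjj' =>
        by_contra fun hne => disjoint_left.1 (hdisj j j' hne) (hgR j) (hjj' ▸ hgR j')

theorem not_isPIRMatrix_twelve_eight {n : ℕ} (hn : n ≤ 24) (G : Matrix (Fin 12) (Fin n) (ZMod 2)) :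
    ¬ IsPIRMatrix 12 n 8 G := by
  intro hG
  have hw : ∀ x, x ≠ 0 → 8 ≤ hammingNorm (G.vecMulLinear x) := fun x hx =>
    hG.le_hammingNorm_vecMul hx
  have h8n : 8 ≤ n :=
    (hw (Pi.single 0 1) (by simp)).trans (hammingNorm_le_card_fintype.trans (by simp))
  obtain ⟨R, hdisj, hsum⟩ := hG 0
  obtain ⟨j, j', hjj', hsmall⟩ := exists_ne_mul_add_le_two_mul_sum (fun j => #(R j)) (by simp)
  have htotal : ∑ j, #(R j) ≤ n := by
    rw [← card_biUnion fun a _ b _ hab => hdisj a b hab]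
    exact card_le_univ _ |>.trans (by simp)
  have hdual : ∀ x, ∑ h ∈ R j ∪ R j', G.vecMulLinear x h = 0 := by
    intro x
    rw [sum_union (hdisj j j' hjj')]
    simp only [Matrix.vecMulLinear_apply, sum_vecMul_of_sum_eq_single (hsum _)]
    exact ZModModule.add_self _
  have hS : (R j ∪ R j').Nonempty := by
    refine Nonempty.inl (nonempty_of_ne_empty fun hR => ?_)
    simpa [hR] using congrFun (hsum j) 0
  obtain ⟨W, hSW, -, hW⟩ := exists_subsuperset_card_eq (n := 6) (subset_univ (R j ∪ R j'))
    ((card_union_le _ _).trans (by simp at hsmall; omega)) (by simp; omega)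
  have hcode := HasBinaryCode.shorten_of_sum_eq_zero (k := 7) G.vecMulLinear (by norm_num) hw hSW hS
    hdual (by simp [hW])
  exact not_hasBinaryCode_seven_eight (by simp [Fintype.card_subtype_compl, hW]; omega) hcode

theorem isPIRMatrix_replicate (s k : ℕ) :
    IsPIRMatrix s (k * s) k
      fun r h => (Pi.single (finProdFinEquiv.symm h).2 1 : Fin s → ZMod 2) r := by
  intro i
  refine ⟨fun j => {finProdFinEquiv (j, i)}, fun j j' hne => ?_, fun j => ?_⟩
  · simpa using hne
  · simp only [sum_singleton, Equiv.symm_apply_apply]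

theorem le_PIRlen {s k N : ℕ} (hs : 0 < s) (hk : 0 < k)
    (h : ∀ n ≤ N, ∀ G : Matrix (Fin s) (Fin n) (ZMod 2), ¬ IsPIRMatrix s n k G) :
    N + 1 ≤ PIRlen s k :=
  le_csInf ⟨k * s, Nat.mul_pos hk hs, _, isPIRMatrix_replicate s k⟩ fun n ⟨_, G, hG⟩ => by
    by_contra hlt
    exact h n (by omega) G hG

/-- `P(12,8) ≥ 25`: no `12 × n` matrix over `𝔽₂` with `n ≤ 24` is an
`8`-PIR generator matrix. -/
theorem stmt_10 :
    25 ≤ PIRlen 12 8 ∧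
    ∀ n : ℕ, n ≤ 24 → ∀ G : Matrix (Fin 12) (Fin n) (ZMod 2),
      ¬ IsPIRMatrix 12 n 8 G :=
  ⟨le_PIRlen (by norm_num) (by norm_num) fun _ hn G => not_isPIRMatrix_twelve_eight hn G,
    fun _ hn G => not_isPIRMatrix_twelve_eight hn G⟩
end

section
/- Let s ≥ 1 and ℓ ≥ 0 be integers, set n = 2^{s-1} + ℓ·(2^s − 1), and let G be an s-by-n matrix over F_2 of rank s such that every nonzero F_2-linear combination of the rows of G has Hamming weight at least (2ℓ+1)·2^{s-2}. Then every nonzero vector of F_2^s occurs as a column of G with multiplicity either ℓ or ℓ+1, and the set consisting of the zero vector together with the nonzero vectors occurring with multiplicity exactly ℓ is an (s−1)-dimensional linear subspace (a hyperplane) of F_2^s. -/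
open Finset

namespace Stmt11Aux

def ip {s : ℕ} (c p : Fin s → ZMod 2) : ZMod 2 := ∑ i, c i * p i

lemma z2cases (a : ZMod 2) : a = 0 ∨ a = 1 := by revert a; decide

lemma z2ne0 (a : ZMod 2) : a ≠ 0 ↔ a = 1 := by revert a; decide

lemma z2ne1 (a : ZMod 2) : ¬ a = 0 ↔ a = 1 := by revert a; decide

lemma z2addadd (a b : ZMod 2) : a + b + b = a := by revert a b; decide

lemma ip_add_left {s : ℕ} (c e p : Fin s → ZMod 2) : ip (c + e) p = ip c p + ip e p := by
  simp [ip, add_mul, Finset.sum_add_distrib]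

lemma ip_add_right {s : ℕ} (c p q : Fin s → ZMod 2) : ip c (p + q) = ip c p + ip c q := by
  simp [ip, mul_add, Finset.sum_add_distrib]

lemma ip_zero_left {s : ℕ} (p : Fin s → ZMod 2) : ip 0 p = 0 := by simp [ip]

lemma ip_zero_right {s : ℕ} (c : Fin s → ZMod 2) : ip c 0 = 0 := by simp [ip]

lemma ip_single_left {s : ℕ} (i : Fin s) (p : Fin s → ZMod 2) :
    ip (Pi.single i 1) p = p i := by
  simp [ip, Pi.single_apply, Finset.sum_ite_eq]


lemma card_shift2 {s : ℕ} (p q e : Fin s → ZMod 2) (α β : ZMod 2) :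
    (univ.filter fun c => ip c p = α ∧ ip c q = β).card
      = (univ.filter fun c => ip c p = α + ip e p ∧ ip c q = β + ip e q).card := by
  apply Finset.card_bij' (fun c _ => c + e) (fun c _ => c + e)
  · intro c hc
    simp only [mem_filter, mem_univ, true_and] at hc ⊢
    rw [ip_add_left, ip_add_left, hc.1, hc.2]
    exact ⟨rfl, rfl⟩
  · intro c hc
    simp only [mem_filter, mem_univ, true_and] at hc ⊢
    rw [ip_add_left, ip_add_left, hc.1, hc.2]
    constructor <;> exact z2addadd _ _
  · intro c _; funext i; exact z2addadd _ _
  · intro c _; funext i; exact z2addadd _ _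

lemma card_shift1 {s : ℕ} (p e : Fin s → ZMod 2) (α : ZMod 2) :
    (univ.filter fun c => ip c p = α).card
      = (univ.filter fun c => ip c p = α + ip e p).card := by
  apply Finset.card_bij' (fun c _ => c + e) (fun c _ => c + e)
  · intro c hc
    simp only [mem_filter, mem_univ, true_and] at hc ⊢
    rw [ip_add_left, hc]
  · intro c hc
    simp only [mem_filter, mem_univ, true_and] at hc ⊢
    rw [ip_add_left, hc]
    exact z2addadd _ _
  · intro c _; funext i; exact z2addadd _ _
  · intro c _; funext i; exact z2addadd _ _

lemma exists_one {s : ℕ} {p : Fin s → ZMod 2} (hp : p ≠ 0) : ∃ i, p i = 1 := by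
  by_contra h
  push_neg at h
  exact hp (funext fun i => by rcases z2cases (p i) with h0 | h1
                               · exact h0
                               · exact absurd h1 (h i))

lemma s_pos {s : ℕ} {p : Fin s → ZMod 2} (hp : p ≠ 0) : 1 ≤ s := by
  rcases Nat.eq_zero_or_pos s with h | h
  · subst h; exact absurd (Subsingleton.elim p 0) hp
  · exact h

lemma card_univ_V (s : ℕ) : Fintype.card (Fin s → ZMod 2) = 2 ^ s := by
  simp [Fintype.card_fun]

lemma cardA0_add_cardA1 {s : ℕ} (p : Fin s → ZMod 2) :
    (univ.filter fun c => ip c p = 0).card + (univ.filter fun c => ip c p = 1).card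
      = 2 ^ s := by
  have h := Finset.card_filter_add_card_filter_not
    (s := (univ : Finset (Fin s → ZMod 2))) (p := fun c => ip c p = 0)
  rw [Finset.filter_congr (fun c _ => z2ne1 (ip c p))] at h
  rw [h, Finset.card_univ, card_univ_V]

lemma cardA0_eq_cardA1 {s : ℕ} {p : Fin s → ZMod 2} (hp : p ≠ 0) :
    (univ.filter fun c => ip c p = 0).card = (univ.filter fun c => ip c p = 1).card := by
  obtain ⟨i, hi⟩ := exists_one hp
  have h := card_shift1 p (Pi.single i 1) 0
  rwa [ip_single_left, hi, zero_add] at h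

lemma cardA1 {s : ℕ} {p : Fin s → ZMod 2} (hp : p ≠ 0) :
    (univ.filter fun c => ip c p = 1).card = 2 ^ (s - 1) := by
  have h1 := cardA0_add_cardA1 p
  have h2 := cardA0_eq_cardA1 hp
  have hs := s_pos hp
  have hpow : 2 ^ s = 2 * 2 ^ (s - 1) := by
    conv_lhs => rw [show s = (s - 1) + 1 by omega]
    ring
  omega

lemma cardA0 {s : ℕ} {p : Fin s → ZMod 2} (hp : p ≠ 0) :
    (univ.filter fun c => ip c p = 0).card = 2 ^ (s - 1) := by
  have h1 := cardA0_add_cardA1 p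
  have h2 := cardA1 hp
  have hs := s_pos hp
  have hpow : 2 ^ s = 2 * 2 ^ (s - 1) := by
    conv_lhs => rw [show s = (s - 1) + 1 by omega]
    ring
  omega


lemma z2pair1 (x y : ZMod 2) : x + y = 0 ∧ x = 0 ↔ x = 0 ∧ y = 0 := by revert x y; decide

lemma z2eq_of_add (x y : ZMod 2) : x + y = 0 → x = y := by revert x y; decide

lemma cardB {s : ℕ} {p q : Fin s → ZMod 2} (hp : p ≠ 0) (hq : q ≠ 0) (hpq : p ≠ q)
    (hs2 : 2 ≤ s) :
    (univ.filter fun c => ip c p = 0 ∧ ip c q = 1).card = 2 ^ (s - 2) := by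
  have hpq0 : p + q ≠ 0 := by
    intro h
    exact hpq (funext fun i => z2eq_of_add _ _ (congrFun h i))
  -- a + b = 2^(s-1)
  have eq1 : (univ.filter fun c => ip c p = 0 ∧ ip c q = 0).card
      + (univ.filter fun c => ip c p = 0 ∧ ip c q = 1).card = 2 ^ (s - 1) := by
    have h := Finset.card_filter_add_card_filter_not
      (s := univ.filter fun c : Fin s → ZMod 2 => ip c p = 0) (p := fun c => ip c q = 0)
    rw [Finset.filter_filter, Finset.filter_filter] at h
    rw [Finset.filter_congr (p := fun c => ip c p = 0 ∧ ¬ ip c q = 0)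
      (q := fun c => ip c p = 0 ∧ ip c q = 1)
      (fun c _ => by show ip c p = 0 ∧ ¬ ip c q = 0 ↔ ip c p = 0 ∧ ip c q = 1
                     rw [z2ne1 (ip c q)])] at h
    rw [h, cardA0 hp]
  -- a + d = 2^(s-1)
  have eq2 : (univ.filter fun c => ip c p = 0 ∧ ip c q = 0).card
      + (univ.filter fun c => ip c p = 1 ∧ ip c q = 1).card = 2 ^ (s - 1) := by
    have h := Finset.card_filter_add_card_filter_not
      (s := univ.filter fun c : Fin s → ZMod 2 => ip c (p + q) = 0) (p := fun c => ip c p = 0)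
    rw [Finset.filter_filter, Finset.filter_filter] at h
    rw [Finset.filter_congr (q := fun c => ip c p = 0 ∧ ip c q = 0)
      (fun c _ => by show ip c (p + q) = 0 ∧ ip c p = 0 ↔ ip c p = 0 ∧ ip c q = 0
                     rw [ip_add_right]; exact z2pair1 _ _)] at h
    rw [Finset.filter_congr (p := fun c => ip c (p + q) = 0 ∧ ¬ ip c p = 0)
      (q := fun c => ip c p = 1 ∧ ip c q = 1)
      (fun c _ => by show ip c (p + q) = 0 ∧ ¬ ip c p = 0 ↔ ip c p = 1 ∧ ip c q = 1
                     rw [ip_add_right]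
                     rcases z2cases (ip c p) with h1 | h1 <;>
                     rcases z2cases (ip c q) with h2 | h2 <;>
                     rw [h1, h2] <;> simp <;> decide)] at h
    rw [h, cardA0 hpq0]
  -- shift
  obtain ⟨i, hi⟩ := exists_one hq
  have hsh := card_shift2 p q (Pi.single i 1) 0 0
  rw [ip_single_left, ip_single_left, hi, zero_add, zero_add] at hsh
  have hpow : 2 ^ (s - 1) = 2 * 2 ^ (s - 2) := by
    conv_lhs => rw [show s - 1 = (s - 2) + 1 by omega]
    ring
  rcases z2cases (p i) with h1 | h1
  · rw [h1] at hsh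
    omega
  · rw [h1] at hsh
    omega


lemma card_fiber {s n : ℕ} (col : Fin n → (Fin s → ZMod 2))
    (Q : (Fin s → ZMod 2) → Prop) [DecidablePred Q] :
    (univ.filter fun j => Q (col j)).card
      = ∑ p ∈ univ.filter Q, (univ.filter fun j => col j = p).card := by
  rw [Finset.card_eq_sum_card_fiberwise
    (f := col) (t := univ.filter Q) (fun j hj => by simp at hj ⊢; exact hj)]
  apply Finset.sum_congr rfl
  intro p hp
  simp only [mem_filter, mem_univ, true_and] at hp
  congr 1
  rw [Finset.filter_filter]
  apply Finset.filter_congr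
  intro j _
  show Q (col j) ∧ col j = p ↔ col j = p
  constructor
  · exact fun h => h.2
  · exact fun h => ⟨h ▸ hp, h⟩

lemma double_count {s n : ℕ} (col : Fin n → (Fin s → ZMod 2))
    (C : Finset (Fin s → ZMod 2)) :
    ∑ c ∈ C, (univ.filter fun j => ip c (col j) = 1).card
      = ∑ p : Fin s → ZMod 2,
          (univ.filter fun j => col j = p).card * (C.filter fun c => ip c p = 1).card := by
  have h1 : ∀ c, (univ.filter fun j => ip c (col j) = 1).card
      = ∑ p : Fin s → ZMod 2, if ip c p = 1 then (univ.filter fun j => col j = p).card else 0 := by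
    intro c
    rw [card_fiber col (fun p => ip c p = 1), Finset.sum_filter]
  calc ∑ c ∈ C, (univ.filter fun j => ip c (col j) = 1).card
      = ∑ c ∈ C, ∑ p : Fin s → ZMod 2,
          if ip c p = 1 then (univ.filter fun j => col j = p).card else 0 := by
        exact Finset.sum_congr rfl fun c _ => h1 c
    _ = ∑ p : Fin s → ZMod 2, ∑ c ∈ C,
          if ip c p = 1 then (univ.filter fun j => col j = p).card else 0 := Finset.sum_comm
    _ = ∑ p : Fin s → ZMod 2,
          (univ.filter fun j => col j = p).card * (C.filter fun c => ip c p = 1).card := by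
        apply Finset.sum_congr rfl
        intro p _
        rw [← Finset.sum_filter, Finset.sum_const, smul_eq_mul, mul_comm]

lemma rigidity {α : Type*} {A : Finset α} {f : α → ℕ} {d : ℕ}
    (h1 : ∀ x ∈ A, d ≤ f x) (h2 : ∑ x ∈ A, f x ≤ A.card * d) :
    ∀ x ∈ A, f x = d := by
  intro x hx
  by_contra hne
  have hlt : d < f x := lt_of_le_of_ne (h1 x hx) (Ne.symm hne)
  have : A.card * d < ∑ y ∈ A, f y := by
    calc A.card * d = ∑ _y ∈ A, d := by rw [Finset.sum_const, smul_eq_mul]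
    _ < ∑ y ∈ A, f y := Finset.sum_lt_sum h1 ⟨x, hx, hlt⟩
  omega


lemma ip_single_right {s : ℕ} (c : Fin s → ZMod 2) (i : Fin s) :
    ip c (Pi.single i 1) = c i := by
  simp [ip, Pi.single_apply, Finset.sum_ite_eq]

lemma ne_zero_of_ip_one {s : ℕ} {c p : Fin s → ZMod 2} (h : ip c p = 1) : c ≠ 0 := by
  rintro rfl
  rw [ip_zero_left] at h
  exact absurd h (by decide)


end Stmt11Aux

open Finset Stmt11Aux

/-- Uniqueness-type structure of `[2^{s-1} + ℓ(2^s - 1), s, (2ℓ+1)2^{s-2}]`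
codes: every nonzero vector occurs as a column with multiplicity `ℓ` or
`ℓ + 1`, and the points of multiplicity `ℓ` (together with `0`) form a
hyperplane. -/
theorem stmt_11 (s l : ℕ) (hs : 1 ≤ s)
    (G : Matrix (Fin s) (Fin (2 ^ (s - 1) + l * (2 ^ s - 1))) (ZMod 2))
    (hrank : G.rank = s)
    (hdist : ∀ c : Fin s → ZMod 2, c ≠ 0 →
      (2 * l + 1) * 2 ^ (s - 2) ≤
        (Finset.univ.filter fun j => Matrix.vecMul c G j ≠ 0).card) :
    (∀ p : Fin s → ZMod 2, p ≠ 0 →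
      (Finset.univ.filter fun j => (fun r : Fin s => G r j) = p).card = l ∨
      (Finset.univ.filter fun j => (fun r : Fin s => G r j) = p).card = l + 1) ∧
    ∃ H : Submodule (ZMod 2) (Fin s → ZMod 2),
      Module.finrank (ZMod 2) H = s - 1 ∧
      ∀ p : Fin s → ZMod 2,
        (p ∈ H ↔ p = 0 ∨
          (Finset.univ.filter fun j => (fun r : Fin s => G r j) = p).card = l) := by
  rcases Nat.lt_or_ge s 2 with hs1 | hs2
  · -- case s = 1
    obtain rfl : s = 1 := by omega
    have hc₁ne : (fun _ => (1:ZMod 2) : Fin 1 → ZMod 2) ≠ 0 := by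
      intro h
      have := congrFun h 0
      simp at this
    have hd := hdist _ hc₁ne
    have hd' : 2 * l + 1 ≤ (Finset.univ.filter fun j =>
        Matrix.vecMul (fun _ => (1:ZMod 2)) G j ≠ 0).card := by
      have h20 : (2*l+1)*2^(1-2) = 2*l+1 := by norm_num
      rwa [h20] at hd
    have hle : (Finset.univ.filter fun j =>
        Matrix.vecMul (fun _ => (1:ZMod 2)) G j ≠ 0).card ≤ 1 + l := by
      calc _ ≤ (Finset.univ : Finset (Fin (2 ^ (1-1) + l * (2^1 - 1)))).card :=
            Finset.card_filter_le _ _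
        _ = 1 + l := by norm_num
    obtain rfl : l = 0 := by omega
    have huniv : (Finset.univ.filter fun j =>
        Matrix.vecMul (fun _ => (1:ZMod 2)) G j ≠ 0) = Finset.univ := by
      apply Finset.eq_univ_of_card
      have hle1 : Fintype.card (Fin (2 ^ (1-1) + 0 * (2^1 - 1))) = 1 := by norm_num
      omega
    have hcol : ∀ j, (fun r : Fin 1 => G r j) = (fun _ => (1:ZMod 2)) := by
      intro j
      have hj : Matrix.vecMul (fun _ => (1:ZMod 2)) G j ≠ 0 := by
        have := huniv ▸ Finset.mem_univ j
        exact (Finset.mem_filter.mp this).2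
      have hv : Matrix.vecMul (fun _ => (1:ZMod 2)) G j = G 0 j := by
        simp [Matrix.vecMul, dotProduct, Fin.sum_univ_one]
      rw [hv] at hj
      funext r
      rw [Subsingleton.elim r 0]
      exact (z2ne0 _).mp hj
    have hfull : ∀ p : Fin 1 → ZMod 2, p ≠ 0 →
        (Finset.univ.filter fun j => (fun r : Fin 1 => G r j) = p).card = 1 := by
      intro p hp
      have hp1 : p = (fun _ => (1:ZMod 2)) := by
        funext r
        rcases z2cases (p r) with h | h
        · exfalso
          apply hp
          funext r'
          rw [Subsingleton.elim r' r, h]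
          rfl
        · exact h
      have : (Finset.univ.filter fun j => (fun r : Fin 1 => G r j) = p) = Finset.univ := by
        apply Finset.eq_univ_of_forall
        intro j
        simp only [Finset.mem_filter, Finset.mem_univ, true_and]
        rw [hcol j, hp1]
      rw [this]
      simp
    refine ⟨fun p hp => Or.inr (by rw [hfull p hp]), ⊥, by simp, fun p => ?_⟩
    rw [Submodule.mem_bot]
    constructor
    · exact fun h => Or.inl h
    · rintro (rfl | h)
      · rfl
      · by_contra hp
        rw [hfull p hp] at h
        exact one_ne_zero h
  · -- case s ≥ 2
    obtain ⟨t, rfl⟩ : ∃ t, s = t + 2 := ⟨s - 2, by omega⟩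
    have hP1 : 1 ≤ 2 ^ t := Nat.one_le_two_pow
    set P := 2 ^ t with hPdef
    have h2P : 2 ^ (t+2-1) = 2 * P := by
      show 2 ^ (t+1) = 2 * P
      rw [hPdef]
      ring
    have h4P : 2 ^ (t+2) = 4 * P := by
      rw [hPdef]
      ring
    let m : (Fin (t+2) → ZMod 2) → ℕ :=
      fun p => (Finset.univ.filter fun j => (fun r : Fin (t+2) => G r j) = p).card
    let w : (Fin (t+2) → ZMod 2) → ℕ :=
      fun c => (Finset.univ.filter fun j => ip c (fun r : Fin (t+2) => G r j) = 1).card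
    have hwd : ∀ c : Fin (t+2) → ZMod 2, c ≠ 0 → (2*l+1)*P ≤ w c := by
      intro c hc
      have h := hdist c hc
      have heq : (Finset.univ.filter fun j => Matrix.vecMul c G j ≠ 0)
          = (Finset.univ.filter fun j => ip c (fun r : Fin (t+2) => G r j) = 1) := by
        apply Finset.filter_congr
        intro j _
        show Matrix.vecMul c G j ≠ 0 ↔ _
        rw [show Matrix.vecMul c G j = ip c (fun r : Fin (t+2) => G r j) from rfl]
        exact z2ne0 _
      rw [heq] at h
      exact h
    set N : Finset (Fin (t+2) → ZMod 2) := Finset.univ.filter (fun p => p ≠ 0) with hNdef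
    have hmemN : ∀ p : Fin (t+2) → ZMod 2, p ∈ N ↔ p ≠ 0 := by
      intro p
      simp [hNdef]
    have hcardN : N.card + 1 = 4*P := by
      have he : N = (Finset.univ : Finset (Fin (t+2) → ZMod 2)).erase 0 := by
        rw [hNdef]
        ext c
        simp
      rw [he, Finset.card_erase_of_mem (Finset.mem_univ _), Finset.card_univ, card_univ_V, h4P]
      omega
    have htot : ∑ p : Fin (t+2) → ZMod 2, m p = 2^(t+2-1) + l*(2^(t+2) - 1) := by
      have h := Finset.card_eq_sum_card_fiberwise
        (s := (Finset.univ : Finset (Fin (2^(t+2-1) + l*(2^(t+2)-1)))))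
        (t := (Finset.univ : Finset (Fin (t+2) → ZMod 2)))
        (f := fun j => (fun r : Fin (t+2) => G r j)) (fun j _ => Finset.mem_univ _)
      rw [Finset.card_univ, Fintype.card_fin] at h
      exact h.symm
    have hMnz : m 0 + ∑ p ∈ N, m p = 2^(t+2-1) + l*(2^(t+2)-1) := by
      rw [← htot, ← Finset.sum_filter_add_sum_filter_not Finset.univ (fun p => p = 0) m]
      have h1 : Finset.univ.filter (fun p : Fin (t+2) → ZMod 2 => p = 0) = {0} := by
        ext c
        simp
      have h2 : Finset.univ.filter (fun p : Fin (t+2) → ZMod 2 => ¬ p = 0) = N := by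
        rw [hNdef]
      rw [h1, h2, Finset.sum_singleton]
    set Mnz := ∑ p ∈ N, m p with hMnzdef
    have hS1 : ∑ c ∈ N, w c = Mnz * (2*P) := by
      have h : ∑ c ∈ N, w c
          = ∑ p : Fin (t+2) → ZMod 2, m p * (N.filter fun c => ip c p = 1).card :=
        double_count (fun j (r : Fin (t+2)) => G r j) N
      rw [h]
      rw [← Finset.sum_subset (Finset.subset_univ N) ?_]
      · rw [hMnzdef, Finset.sum_mul]
        apply Finset.sum_congr rfl
        intro p hp
        have hp0 : p ≠ 0 := (hmemN p).mp hp
        congr 1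
        have he : N.filter (fun c => ip c p = 1) = Finset.univ.filter (fun c => ip c p = 1) := by
          ext c
          simp only [Finset.mem_filter, hNdef, Finset.mem_univ, true_and]
          constructor
          · exact fun h => h.2
          · exact fun h => ⟨ne_zero_of_ip_one h, h⟩
        rw [he, cardA1 hp0]
        show 2 ^ (t+2-1) = 2 * P
        exact h2P
      · intro p _ hp
        have hp0 : p = 0 := by
          by_contra h
          exact hp ((hmemN p).mpr h)
        subst hp0
        have he : N.filter (fun c => ip c (0 : Fin (t+2) → ZMod 2) = 1) = ∅ := by
          ext c
          simp [ip_zero_right]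
        rw [he]
        simp
    -- atoms
    obtain ⟨X, hXdef⟩ : ∃ X, N.card = X := ⟨_, rfl⟩
    rw [hXdef] at hcardN
    obtain ⟨B, hB⟩ : ∃ B, l*P = B := ⟨_, rfl⟩
    obtain ⟨A, hA⟩ : ∃ A, l*X = A := ⟨_, rfl⟩
    have hA4 : A + l = 4*B := by
      rw [← hA, ← hB]
      calc l*X + l = l*(X+1) := by ring
        _ = l*(4*P) := by rw [hcardN]
        _ = 4*(l*P) := by ring
    have hn' : m 0 + Mnz = 2*P + A := by
      have hXval : 2^(t+2) - 1 = X := by omega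
      rw [← hA, ← hXval, ← h2P]
      exact hMnz
    have hm0 : m 0 = 0 := by
      have h1 : N.card • ((2*l+1)*P) ≤ ∑ c ∈ N, w c :=
        Finset.card_nsmul_le_sum N w _ (fun c hc => hwd c ((hmemN c).mp hc))
      rw [smul_eq_mul, hS1, hXdef] at h1
      have h2 : (2*A + X)*P ≤ (2*Mnz)*P := by
        calc (2*A + X)*P = X*((2*l+1)*P) := by rw [← hA]; ring
          _ ≤ Mnz*(2*P) := h1
          _ = (2*Mnz)*P := by ring
      have h3 : 2*A + X ≤ 2*Mnz := Nat.le_of_mul_le_mul_right h2 (by omega)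
      omega
    -- per-point analysis
    have key : ∀ p : Fin (t+2) → ZMod 2, p ≠ 0 →
        (l ≤ m p ∧ m p ≤ l + 1) ∧
        (m p = l → ∀ c, ip c p = 1 → w c = (2*l+1)*P) ∧
        (m p = l + 1 → ∀ c, c ≠ 0 → ip c p = 0 → w c = (2*l+1)*P) := by
      intro p hp
      set Np0 := N.filter (fun c => ip c p = 0) with hNp0
      set Np1 := Finset.univ.filter (fun c => ip c p = 1) with hNp1
      set Mp := ∑ q ∈ N.erase p, m q with hMpdef
      have hsplitp : m p + Mp = Mnz := by
        rw [hMpdef, hMnzdef]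
        exact Finset.add_sum_erase N m ((hmemN p).mpr hp)
      have hmemNp0 : ∀ c, c ∈ Np0 ↔ (c ≠ 0 ∧ ip c p = 0) := by
        intro c
        simp [hNp0, hNdef]
      have hmemNp1 : ∀ c, c ∈ Np1 ↔ ip c p = 1 := by
        intro c
        simp [hNp1]
      have hcardNp1 : Np1.card = 2*P := by
        rw [hNp1, cardA1 hp]
        exact h2P
      have hcardNp0 : Np0.card + 1 = 2*P := by
        have he : Np0 = (Finset.univ.filter fun c => ip c p = 0).erase 0 := by
          ext c
          simp only [hmemNp0, Finset.mem_erase, Finset.mem_filter, Finset.mem_univ, true_and]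
        rw [he, Finset.card_erase_of_mem (by simp [ip_zero_left]), cardA0 hp, h2P]
        omega
      have hS2 : ∑ c ∈ Np0, w c = Mp * P := by
        have h : ∑ c ∈ Np0, w c
            = ∑ q : Fin (t+2) → ZMod 2, m q * (Np0.filter fun c => ip c q = 1).card :=
          double_count (fun j (r : Fin (t+2)) => G r j) Np0
        rw [h]
        rw [← Finset.sum_subset (Finset.subset_univ (N.erase p)) ?_]
        · rw [hMpdef, Finset.sum_mul]
          apply Finset.sum_congr rfl
          intro q hq
          obtain ⟨hqp, hqN⟩ := Finset.mem_erase.mp hq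
          have hq0 : q ≠ 0 := (hmemN q).mp hqN
          congr 1
          have he : Np0.filter (fun c => ip c q = 1)
              = Finset.univ.filter (fun c => ip c p = 0 ∧ ip c q = 1) := by
            ext c
            simp only [Finset.mem_filter, hmemNp0, Finset.mem_univ, true_and]
            constructor
            · exact fun h => ⟨h.1.2, h.2⟩
            · exact fun h => ⟨⟨ne_zero_of_ip_one h.2, h.1⟩, h.2⟩
          rw [he, cardB hp hq0 (Ne.symm hqp) hs2]
          show 2 ^ (t+2-2) = P
          rfl
        · intro q _ hq
          by_cases hq0 : q = 0
          · subst hq0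
            have he : Np0.filter (fun c => ip c (0 : Fin (t+2) → ZMod 2) = 1) = ∅ := by
              ext c
              simp [ip_zero_right]
            rw [he]
            simp
          · have hqp : q = p := by
              by_contra h
              exact hq (Finset.mem_erase.mpr ⟨h, (hmemN q).mpr hq0⟩)
            subst hqp
            have he : Np0.filter (fun c => ip c q = 1) = ∅ := by
              ext c
              simp only [Finset.mem_filter, hmemNp0, Finset.notMem_empty, iff_false]
              rintro ⟨⟨_, h0⟩, h1⟩
              rw [h0] at h1
              exact absurd h1 (by decide)
            rw [he]
            simp
      have hS3 : ∑ c ∈ Np1, w c + Mp * P = Mnz * (2*P) := by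
        rw [← hS2, ← hS1, ← Finset.sum_filter_add_sum_filter_not N (fun c => ip c p = 0) w]
        have he : N.filter (fun c => ¬ ip c p = 0) = Np1 := by
          ext c
          simp only [Finset.mem_filter, hNdef, hmemNp1, Finset.mem_univ, true_and]
          rw [z2ne1]
          constructor
          · exact fun h => h.2
          · exact fun h => ⟨ne_zero_of_ip_one h, h⟩
        rw [he]
        exact Nat.add_comm _ _
      obtain ⟨Y, hYdef⟩ : ∃ Y, Np0.card = Y := ⟨_, rfl⟩
      rw [hYdef] at hcardNp0
      obtain ⟨A2, hA2⟩ : ∃ A2, l*Y = A2 := ⟨_, rfl⟩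
      have hA2v : A2 + l = 2*B := by
        rw [← hA2, ← hB]
        calc l*Y + l = l*(Y+1) := by ring
          _ = l*(2*P) := by rw [hcardNp0]
          _ = 2*(l*P) := by ring
      have hlow : 2*A2 + Y ≤ Mp := by
        have h1 : Np0.card • ((2*l+1)*P) ≤ ∑ c ∈ Np0, w c :=
          Finset.card_nsmul_le_sum Np0 w _
            (fun c hc => hwd c ((hmemNp0 c).mp hc).1)
        rw [smul_eq_mul, hS2, hYdef] at h1
        have h2 : (2*A2 + Y)*P ≤ Mp*P := by
          calc (2*A2 + Y)*P = Y*((2*l+1)*P) := by rw [← hA2]; ring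
            _ ≤ Mp*P := h1
        exact Nat.le_of_mul_le_mul_right h2 (by omega)
      have hup : 4*B + 2*P + Mp ≤ 2*Mnz := by
        have h1 : Np1.card • ((2*l+1)*P) ≤ ∑ c ∈ Np1, w c :=
          Finset.card_nsmul_le_sum Np1 w _
            (fun c hc => hwd c (ne_zero_of_ip_one ((hmemNp1 c).mp hc)))
        rw [smul_eq_mul, hcardNp1] at h1
        have h2 : (4*B + 2*P + Mp)*P ≤ (2*Mnz)*P := by
          calc (4*B + 2*P + Mp)*P = 2*P*((2*l+1)*P) + Mp*P := by rw [← hB]; ring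
            _ ≤ (∑ c ∈ Np1, w c) + Mp*P := Nat.add_le_add_right h1 _
            _ = Mnz * (2*P) := hS3
            _ = (2*Mnz)*P := by ring
        exact Nat.le_of_mul_le_mul_right h2 (by omega)
      refine ⟨⟨by omega, by omega⟩, ?_, ?_⟩
      · intro hmp c hc1
        have hrig : ∀ c ∈ Np1, w c = (2*l+1)*P := by
          apply rigidity (fun c hc => hwd c (ne_zero_of_ip_one ((hmemNp1 c).mp hc)))
          rw [hcardNp1]
          have h6 : Mnz*(2*P) ≤ 2*P*((2*l+1)*P) + Mp*P := by
            calc Mnz*(2*P) = (2*Mnz)*P := by ring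
              _ ≤ (4*B + 2*P + Mp)*P := Nat.mul_le_mul_right _ (by omega)
              _ = 2*P*((2*l+1)*P) + Mp*P := by rw [← hB]; ring
          rw [← hS3] at h6
          omega
        exact hrig c ((hmemNp1 c).mpr hc1)
      · intro hmp c hc0 hcp
        have hrig : ∀ c ∈ Np0, w c = (2*l+1)*P := by
          apply rigidity (fun c hc => hwd c ((hmemNp0 c).mp hc).1)
          rw [hS2, hYdef]
          have h7 : Mp ≤ 2*A2 + Y := by omega
          calc Mp * P ≤ (2*A2 + Y)*P := Nat.mul_le_mul_right _ h7
            _ = Y*((2*l+1)*P) := by rw [← hA2]; ring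
        exact hrig c ((hmemNp0 c).mpr ⟨hc0, hcp⟩)
    -- existence of an excess codeword
    have hex : ∃ c : Fin (t+2) → ZMod 2, c ≠ 0 ∧ (2*l+1)*P + 1 ≤ w c := by
      by_contra hcon
      push_neg at hcon
      have hall : ∀ c ∈ N, w c = (2*l+1)*P := by
        intro c hc
        have h1 := hwd c ((hmemN c).mp hc)
        have h2 := hcon c ((hmemN c).mp hc)
        omega
      have hsum : ∑ c ∈ N, w c = X * ((2*l+1)*P) := by
        rw [Finset.sum_congr rfl hall, Finset.sum_const, smul_eq_mul, hXdef]
      have h8 : (2*Mnz)*P = (2*A+X)*P := by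
        calc (2*Mnz)*P = Mnz*(2*P) := by ring
          _ = X*((2*l+1)*P) := by rw [← hS1, hsum]
          _ = (2*A+X)*P := by rw [← hA]; ring
      have h9 : 2*Mnz = 2*A+X := Nat.eq_of_mul_eq_mul_right (by omega) h8
      omega
    obtain ⟨c₀, hc₀ne, hc₀w⟩ := hex
    let f : (Fin (t+2) → ZMod 2) →ₗ[ZMod 2] ZMod 2 := ∑ i, c₀ i • LinearMap.proj i
    have hf : ∀ p : Fin (t+2) → ZMod 2, f p = ip c₀ p := by
      intro p
      show (∑ i, c₀ i • LinearMap.proj i) p = ip c₀ p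
      rw [LinearMap.sum_apply, ip]
      apply Finset.sum_congr rfl
      intro i _
      simp
    obtain ⟨i0, hi0⟩ := exists_one hc₀ne
    refine ⟨?_, LinearMap.ker f, ?_, ?_⟩
    · intro p hp
      have h := (key p hp).1
      show m p = l ∨ m p = l + 1
      omega
    · have hcard_V : Module.finrank (ZMod 2) (Fin (t+2) → ZMod 2) = t + 2 := by
        simp [Module.finrank_pi]
      have hsurj : LinearMap.range f = ⊤ := by
        rw [LinearMap.range_eq_top]
        intro y
        rcases z2cases y with h | h
        · exact ⟨0, by rw [map_zero, h]⟩
        · refine ⟨Pi.single i0 1, ?_⟩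
          rw [hf, ip_single_right, hi0, h]
      have hrk := LinearMap.finrank_range_add_finrank_ker f
      rw [hsurj, finrank_top, hcard_V, Module.finrank_self] at hrk
      omega
    · intro p
      rw [LinearMap.mem_ker, hf]
      show ip c₀ p = 0 ↔ p = 0 ∨ m p = l
      constructor
      · intro h0
        by_cases hp : p = 0
        · exact Or.inl hp
        · right
          obtain ⟨⟨hl1, hl2⟩, hch1, hch2⟩ := key p hp
          by_contra hne
          have hmp : m p = l + 1 := by omega
          have := hch2 hmp c₀ hc₀ne h0
          omega
      · rintro (rfl | hml)
        · exact ip_zero_right c₀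
        · by_cases hp : p = 0
          · subst hp
            exact ip_zero_right c₀
          · obtain ⟨_, hch1, _⟩ := key p hp
            rcases z2cases (ip c₀ p) with h | h
            · exact h
            · have := hch1 hml c₀ h
              omega
end

section
/- Let s and k be positive integers with k > 2^{s-1}, and let G be an s-by-n matrix over F_2 that is a k-PIR generator matrix such that every nonzero vector of F_2^s occurs at least once as a column of G. Then n ≥ P(s, k − 2^{s-1}) + 2^s − 1. -/
/-!
Fix `i`, put `e = eᵢ`, and let `S` consist of one column for each nonzero vector of `𝔽₂ˢ`.
A recovery set `R` of `i` meets `S` in a set `T` of distinct vectors, so its columns outside `S`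
sum to `e + ∑ T`. Recovery sets are combined into disjoint groups whose columns outside `S` again
sum to `e`: if `u` and `u + e` lie in the `T`s of two different groups, merging the two keeps this
sum correct, and otherwise a group containing `u` is dropped. Either step costs one group and
uses up the coset `u + ⟨e⟩`, of which there are only `2^(s-1)`. So at least `k - 2^(s-1)` groups
survive, and they are recovery sets for `i` in the matrix of the `n - (2^s - 1)` columns outside
`S`.
-/

open Finset Function
open scoped Matrix

namespace PIR

section Cosets

variable {V : Type*} [AddCommGroup V] [Module (ZMod 2) V]

theorem eq_or_eq_add_of_mkQ_eq {e u w : V} (h : (ZMod 2 ∙ e).mkQ w = (ZMod 2 ∙ e).mkQ u) :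
    w = u ∨ w = u + e := by
  obtain ⟨a, ha⟩ := Submodule.mem_span_singleton.1 ((Submodule.Quotient.eq _).1 h)
  obtain rfl | rfl : a = 0 ∨ a = 1 := by clear ha; revert a; decide
  · rw [zero_smul, eq_comm, sub_eq_zero] at ha
    exact .inl ha
  · rw [one_smul] at ha
    exact .inr (by rw [ha]; abel)

open Classical in
noncomputable def cosetCount (e : V) (W : Finset V) : ℕ :=
  (W.image (ZMod 2 ∙ e).mkQ).card

theorem cosetCount_mono {e : V} {W W' : Finset V} (h : W' ⊆ W) :
    cosetCount e W' ≤ cosetCount e W := by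
  classical
  exact card_le_card (image_subset_image h)

theorem cosetCount_lt [DecidableEq V] {e u : V} {W W' : Finset V} (hu : u ∈ W)
    (hW' : W' ⊆ W \ {u, u + e}) : cosetCount e W' < cosetCount e W := by
  classical
  refine card_lt_card ((ssubset_iff_of_subset
    (image_subset_image (hW'.trans sdiff_subset))).2 ⟨_, mem_image_of_mem _ hu, ?_⟩)
  intro hu'
  obtain ⟨w, hw, hwu⟩ := mem_image.1 hu'
  have := (mem_sdiff.1 (hW' hw)).2
  rcases eq_or_eq_add_of_mkQ_eq hwu with rfl | rfl <;> simp at this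

theorem cosetCount_mul_two_le [Finite V] {e : V} (he : e ≠ 0) (W : Finset V) :
    cosetCount e W * 2 ≤ Nat.card V := by
  have : Finite (V ⧸ (ZMod 2 ∙ e)) := Finite.of_surjective _ (Submodule.mkQ_surjective _)
  have : Fintype (V ⧸ (ZMod 2 ∙ e)) := Fintype.ofFinite _
  have hcard : Nat.card (ZMod 2 ∙ e) = 2 := by
    rw [← Nat.card_congr (LinearEquiv.toSpanNonzeroSingleton (ZMod 2) V e he).toEquiv,
      Nat.card_zmod]
  rw [Submodule.card_eq_card_quotient_mul_card (ZMod 2 ∙ e), hcard, mul_comm,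
    Nat.card_eq_fintype_card]
  exact Nat.mul_le_mul_left 2 (card_le_univ _)

end Cosets

section Grouping

variable {ι V : Type*} [AddCommMonoid V]

def IsGrouping (e : V) (x : ι → V) (J : Finset ι) (𝒜 : Finset (Finset ι)) : Prop :=
  (∀ A ∈ 𝒜, A ⊆ J ∧ ∑ j ∈ A, x j = e) ∧ (𝒜 : Set (Finset ι)).PairwiseDisjoint id

namespace IsGrouping

variable {e : V} {x : ι → V} {J : Finset ι} {𝒜 : Finset (Finset ι)}

theorem empty (e : V) (x : ι → V) (J : Finset ι) : IsGrouping e x J ∅ := by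
  simp [IsGrouping]

theorem mono {J' : Finset ι} (h : IsGrouping e x J 𝒜) (hJ : J ⊆ J') : IsGrouping e x J' 𝒜 :=
  ⟨fun A hA => ⟨(h.1 A hA).1.trans hJ, (h.1 A hA).2⟩, h.2⟩

end IsGrouping

variable [DecidableEq ι]

def unmerge (j₀ j₁ : ι) (A : Finset ι) : Finset ι :=
  if j₀ ∈ A then insert j₁ A else A

section Unmerge

variable {j₀ j₁ y : ι} {A B : Finset ι}

theorem mem_unmerge : y ∈ unmerge j₀ j₁ A ↔ y ∈ A ∨ y = j₁ ∧ j₀ ∈ A := by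
  by_cases h₀ : j₀ ∈ A <;> simp [unmerge, h₀, or_comm]

theorem erase_unmerge (h₁ : j₁ ∉ A) : (unmerge j₀ j₁ A).erase j₁ = A := by
  by_cases h₀ : j₀ ∈ A
  · rw [unmerge, if_pos h₀, erase_insert h₁]
  · rw [unmerge, if_neg h₀, erase_eq_of_notMem h₁]

theorem sum_unmerge (h₁ : j₁ ∉ A) (x : ι → V) :
    ∑ j ∈ unmerge j₀ j₁ A, x j = ∑ j ∈ A, update x j₀ (x j₀ + x j₁) j := by
  by_cases h₀ : j₀ ∈ A
  · rw [sum_update_of_mem h₀, unmerge, if_pos h₀, sum_insert h₁,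
      sum_eq_add_sum_sdiff_singleton_of_mem h₀]
    abel
  · rw [sum_update_of_notMem h₀, unmerge, if_neg h₀]

theorem disjoint_unmerge (hA : j₁ ∉ A) (hB : j₁ ∉ B) (h : Disjoint A B) :
    Disjoint (unmerge j₀ j₁ A) (unmerge j₀ j₁ B) := by
  refine disjoint_left.2 fun y hyA hyB => ?_
  rcases mem_unmerge.1 hyA with hyA | ⟨rfl, h₀A⟩ <;> rcases mem_unmerge.1 hyB with hyB | ⟨hy, h₀B⟩
  · exact disjoint_left.1 h hyA hyB
  · exact hA (hy ▸ hyA)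
  · exact hB hyB
  · exact disjoint_left.1 h h₀A h₀B

end Unmerge

namespace IsGrouping

variable {e : V} {x : ι → V} {J : Finset ι} {𝒜 : Finset (Finset ι)}

theorem insert_singleton {j : ι} (h : IsGrouping e x (J.erase j) 𝒜) (hj : j ∈ J)
    (hx : x j = e) : IsGrouping e x J (insert {j} 𝒜) ∧ (insert {j} 𝒜).card = 𝒜.card + 1 := by
  have hnot : ∀ A ∈ 𝒜, j ∉ A := fun A hA hjA => by simpa using (h.1 A hA).1 hjA
  refine ⟨⟨fun A hA => ?_, ?_⟩, card_insert_of_notMem fun h' => hnot _ h' (mem_singleton_self j)⟩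
  · rcases mem_insert.1 hA with rfl | hA
    · simpa [hj] using hx
    · exact ⟨(h.1 A hA).1.trans (erase_subset _ _), (h.1 A hA).2⟩
  · rw [coe_insert]
    exact h.2.insert fun B hB _ => by simpa using hnot B hB

theorem merge {j₀ j₁ : ι} (h : IsGrouping e (update x j₀ (x j₀ + x j₁)) (J.erase j₁) 𝒜)
    (h₁ : j₁ ∈ J) : ∃ 𝒜' : Finset (Finset ι), IsGrouping e x J 𝒜' ∧ 𝒜'.card = 𝒜.card := by
  have hj₁ : ∀ A ∈ 𝒜, j₁ ∉ A := fun A hA hj => by simpa using (h.1 A hA).1 hj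
  have hinj : Set.InjOn (unmerge j₀ j₁) 𝒜 := fun A hA B hB hAB => by
    rw [← erase_unmerge (hj₁ A hA), hAB, erase_unmerge (hj₁ B hB)]
  refine ⟨𝒜.image (unmerge j₀ j₁), ⟨forall_mem_image.2 fun A hA => ?_, ?_⟩,
    card_image_of_injOn hinj⟩
  · obtain ⟨hAJ, hsum⟩ := h.1 A hA
    refine ⟨fun y hy => ?_, (sum_unmerge (hj₁ A hA) x).trans hsum⟩
    rcases mem_unmerge.1 hy with hy | ⟨rfl, -⟩
    · exact mem_of_mem_erase (hAJ hy)
    · exact h₁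
  · rw [coe_image, hinj.pairwiseDisjoint_image]
    exact fun A hA B hB hAB => disjoint_unmerge (hj₁ A hA) (hj₁ B hB) (h.2 hA hB hAB)

end IsGrouping

end Grouping

section Core

variable {ι V : Type*} [DecidableEq ι] [DecidableEq V]

theorem mem_update_union_sdiff {T : ι → Finset V} {j₀ j₁ j : ι} {P : Finset V} {v : V}
    (hv : v ∈ update T j₀ ((T j₀ ∪ T j₁) \ P) j) :
    v ∉ P ∧ (v ∈ T j₀ ∨ v ∈ T j₁) ∧ j = j₀ ∨ v ∈ T j ∧ j ≠ j₀ := by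
  by_cases hj : j = j₀
  · subst hj
    simp only [update_self, mem_sdiff, mem_union] at hv
    exact .inl ⟨hv.2, hv.1, rfl⟩
  · rw [update_of_ne hj] at hv
    exact .inr ⟨hv, hj⟩

theorem pairwiseDisjoint_update_union_sdiff {J : Finset ι} {T : ι → Finset V}
    (hT : (J : Set ι).PairwiseDisjoint T) {j₀ j₁ : ι} (hj₁ : j₁ ∈ J) (P : Finset V) :
    ((J.erase j₁ : Finset ι) : Set ι).PairwiseDisjoint
      (update T j₀ ((T j₀ ∪ T j₁) \ P)) := by
  intro j hj j' hj' hne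
  simp only [coe_erase, Set.mem_sdiff, mem_coe, Set.mem_singleton_iff] at hj hj'
  have disj : ∀ {a b}, a ∈ J → b ∈ J → a ≠ b → ∀ {v}, v ∈ T a → v ∉ T b :=
    fun ha hb hab _ hva hvb => disjoint_left.1 (hT ha hb hab) hva hvb
  refine disjoint_left.2 fun v hv hv' => ?_
  rcases mem_update_union_sdiff hv with ⟨-, hvT, rfl⟩ | ⟨hvT, -⟩ <;>
    rcases mem_update_union_sdiff hv' with ⟨-, hvT', rfl⟩ | ⟨hvT', -⟩
  · exact hne rfl
  · rcases hvT with hvT | hvT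
    · exact disj hj.1 hj'.1 hne hvT hvT'
    · exact disj hj₁ hj'.1 (Ne.symm hj'.2) hvT hvT'
  · rcases hvT' with hvT' | hvT'
    · exact disj hj.1 hj'.1 hne hvT hvT'
    · exact disj hj.1 hj₁ hj.2 hvT hvT'
  · exact disj hj.1 hj'.1 hne hvT hvT'

variable [AddCommGroup V]

theorem biUnion_update_union_sdiff_subset {J : Finset ι} {T : ι → Finset V}
    (hT : (J : Set ι).PairwiseDisjoint T) {j₀ j₁ : ι} (hj₀ : j₀ ∈ J) (hj₁ : j₁ ∈ J) {e u : V}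
    (hu : u ∈ T j₀) (hue : u + e ∈ T j₁) :
    (J.erase j₁).biUnion (update T j₀ ((T j₀ ∪ T j₁) \ {u, u + e})) ⊆
      J.biUnion T \ {u, u + e} := by
  intro w hw
  obtain ⟨j, hj, hw⟩ := mem_biUnion.1 hw
  obtain ⟨hj₁', hj⟩ := mem_erase.1 hj
  rcases mem_update_union_sdiff hw with ⟨hwP, hwT | hwT, -⟩ | ⟨hwT, hj₀'⟩
  · exact mem_sdiff.2 ⟨mem_biUnion.2 ⟨j₀, hj₀, hwT⟩, hwP⟩
  · exact mem_sdiff.2 ⟨mem_biUnion.2 ⟨j₁, hj₁, hwT⟩, hwP⟩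
  refine mem_sdiff.2 ⟨mem_biUnion.2 ⟨j, hj, hwT⟩, ?_⟩
  simp only [mem_insert, mem_singleton]
  rintro (rfl | rfl)
  · exact disjoint_left.1 (hT hj hj₀ hj₀') hwT hu
  · exact disjoint_left.1 (hT hj hj₁ hj₁') hwT hue

variable [Module (ZMod 2) V]

theorem add_sum_union_sdiff_pair {A B : Finset V} (hAB : Disjoint A B) {e u : V} (hu : u ∈ A)
    (hue : u + e ∈ B) :
    e + ∑ v ∈ (A ∪ B) \ {u, u + e}, v = (e + ∑ v ∈ A, v) + (e + ∑ v ∈ B, v) := by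
  have hne : u ≠ u + e := fun h => disjoint_left.1 hAB hu (h ▸ hue)
  have hsub : {u, u + e} ⊆ A ∪ B := insert_subset (mem_union_left _ hu) (by simp [hue])
  rw [sum_sdiff_eq_sub hsub, sum_union hAB, sum_pair hne, ZModModule.sub_eq_add, ← add_assoc u,
    ZModModule.add_self, zero_add]
  abel

def GroupingBound (e : V) (J : Finset ι) (T : ι → Finset V) : Prop :=
  ∃ 𝒜, IsGrouping e (fun j => e + ∑ v ∈ T j, v) J 𝒜 ∧
    J.card ≤ 𝒜.card + cosetCount e (J.biUnion T)

namespace GroupingBound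

variable {e : V} {J : Finset ι} {T : ι → Finset V}

theorem of_erase_of_eq_empty {j : ι} (hj : j ∈ J) (hTj : T j = ∅)
    (h : GroupingBound e (J.erase j) T) : GroupingBound e J T := by
  obtain ⟨𝒜, h𝒜, hcard⟩ := h
  obtain ⟨h𝒜', hcard'⟩ := h𝒜.insert_singleton hj (by simp [hTj])
  have := cosetCount_mono (e := e) (biUnion_subset_biUnion_of_subset_left T (erase_subset j J))
  have := card_erase_of_mem hj
  exact ⟨_, h𝒜', by omega⟩

theorem of_erase {j₀ : ι} {u : V} (hT : (J : Set ι).PairwiseDisjoint T) (hj₀ : j₀ ∈ J)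
    (hu : u ∈ T j₀) (hue : ∀ j ∈ J, j ≠ j₀ → u + e ∉ T j)
    (h : GroupingBound e (J.erase j₀) T) : GroupingBound e J T := by
  obtain ⟨𝒜, h𝒜, hcard⟩ := h
  have hsub : (J.erase j₀).biUnion T ⊆ J.biUnion T \ {u, u + e} := by
    intro w hw
    obtain ⟨j, hj, hw⟩ := mem_biUnion.1 hw
    obtain ⟨hj₀', hj⟩ := mem_erase.1 hj
    refine mem_sdiff.2 ⟨mem_biUnion.2 ⟨j, hj, hw⟩, ?_⟩
    simp only [mem_insert, mem_singleton]
    rintro (rfl | rfl)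
    · exact disjoint_left.1 (hT hj hj₀ hj₀') hw hu
    · exact hue j hj hj₀' hw
  have := cosetCount_lt (mem_biUnion.2 ⟨j₀, hj₀, hu⟩) hsub
  have := card_erase_of_mem hj₀
  have := card_pos.2 ⟨j₀, hj₀⟩
  exact ⟨𝒜, h𝒜.mono (erase_subset _ _), by omega⟩

theorem of_merge {j₀ j₁ : ι} {u : V} (hT : (J : Set ι).PairwiseDisjoint T) (hj₀ : j₀ ∈ J)
    (hj₁ : j₁ ∈ J) (hne : j₀ ≠ j₁) (hu : u ∈ T j₀) (hue : u + e ∈ T j₁)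
    (h : GroupingBound e (J.erase j₁) (update T j₀ ((T j₀ ∪ T j₁) \ {u, u + e}))) :
    GroupingBound e J T := by
  obtain ⟨𝒜, h𝒜, hcard⟩ := h
  have hx : (fun j => e + ∑ v ∈ update T j₀ ((T j₀ ∪ T j₁) \ {u, u + e}) j, v) =
      update (fun j => e + ∑ v ∈ T j, v) j₀ ((e + ∑ v ∈ T j₀, v) + (e + ∑ v ∈ T j₁, v)) := by
    funext j
    by_cases hj : j = j₀
    · subst hj
      simp only [update_self, add_sum_union_sdiff_pair (hT hj₀ hj₁ hne) hu hue]
    · simp only [update_of_ne hj]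
  rw [hx] at h𝒜
  obtain ⟨𝒜', h𝒜', hcard'⟩ := h𝒜.merge hj₁
  have := cosetCount_lt (mem_biUnion.2 ⟨j₀, hj₀, hu⟩)
    (biUnion_update_union_sdiff_subset hT hj₀ hj₁ hu hue)
  have := card_erase_of_mem hj₁
  have := card_pos.2 ⟨j₀, hj₀⟩
  exact ⟨𝒜', h𝒜', by omega⟩

end GroupingBound

theorem groupingBound (e : V) (J : Finset ι) (T : ι → Finset V)
    (hT : (J : Set ι).PairwiseDisjoint T) : GroupingBound e J T := by
  induction J using Finset.strongInduction generalizing T with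
  | H J ih =>
  by_cases hempty : ∃ j ∈ J, T j = ∅
  · obtain ⟨j, hj, hTj⟩ := hempty
    exact .of_erase_of_eq_empty hj hTj (ih _ (erase_ssubset hj) T (hT.subset (by simp)))
  by_cases hpair : ∃ j₀ ∈ J, ∃ j₁ ∈ J, j₀ ≠ j₁ ∧ ∃ u ∈ T j₀, u + e ∈ T j₁
  · obtain ⟨j₀, hj₀, j₁, hj₁, hne, u, hu, hue⟩ := hpair
    exact .of_merge hT hj₀ hj₁ hne hu hue
      (ih _ (erase_ssubset hj₁) _ (pairwiseDisjoint_update_union_sdiff hT hj₁ _))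
  push Not at hempty hpair
  rcases J.eq_empty_or_nonempty with rfl | ⟨j₀, hj₀⟩
  · exact ⟨∅, .empty _ _ _, by simp⟩
  obtain ⟨u, hu⟩ := hempty j₀ hj₀
  exact .of_erase hT hj₀ hu (fun j hj hne => hpair j₀ hj₀ j hj hne.symm u hu)
    (ih _ (erase_ssubset hj₀) T (hT.subset (by simp)))

end Core

theorem exists_fin_pairwise_disjoint {α : Type*} {𝒜 : Finset (Finset α)}
    (h𝒜 : (𝒜 : Set (Finset α)).PairwiseDisjoint id) {k : ℕ} (hk : k ≤ 𝒜.card) :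
    ∃ A : Fin k → Finset α, Pairwise (Disjoint on A) ∧ ∀ m, A m ∈ 𝒜 := by
  obtain ⟨f⟩ := Function.Embedding.nonempty_of_card_le
    (by simpa using hk : Fintype.card (Fin k) ≤ Fintype.card 𝒜)
  exact ⟨fun m => f m,
    fun m m' hm => h𝒜 (f m).2 (f m').2 fun h => hm (f.injective (Subtype.ext h)),
    fun m => (f m).2⟩

section Columns

variable {α ι V : Type*} [DecidableEq α] [DecidableEq V] {f : α → V} {S : Finset α}

theorem pairwiseDisjoint_image_inter (hS : Set.InjOn f S) {R : ι → Finset α}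
    (hR : Pairwise (Disjoint on R)) :
    (Set.univ : Set ι).PairwiseDisjoint fun j => (R j ∩ S).image f := by
  intro j _ j' _ hne
  refine disjoint_left.2 fun v hv hv' => ?_
  obtain ⟨h, hh, rfl⟩ := mem_image.1 hv
  obtain ⟨h', hh', hhh'⟩ := mem_image.1 hv'
  rw [mem_inter] at hh hh'
  rw [hS hh'.2 hh.2 hhh'] at hh'
  exact disjoint_left.1 (hR hne) hh.1 hh'.1

variable [AddCommGroup V] [Module (ZMod 2) V]

theorem sum_sdiff_eq_add_sum_image (hS : Set.InjOn f S) {R : Finset α} {e : V}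
    (hR : ∑ h ∈ R, f h = e) : ∑ h ∈ R \ S, f h = e + ∑ v ∈ (R ∩ S).image f, v := by
  rw [sum_image (hS.mono (by simp)), ← hR, ← sum_inter_add_sum_sdiff R S, add_right_comm,
    ZModModule.add_self, zero_add]

end Columns

section Matrix

variable {s n k : ℕ} (G : Matrix (Fin s) (Fin n) (ZMod 2))

theorem PIRlen_le_of_isPIRMatrix (hs : 0 < s) (hk : 0 < k) (hG : IsPIRMatrix s n k G) :
    PIRlen s k ≤ n := by
  refine Nat.sInf_le ⟨Nat.pos_of_ne_zero fun hn => ?_, G, hG⟩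
  subst hn
  obtain ⟨R, -, hR⟩ := hG ⟨0, hs⟩
  have := congrFun (hR ⟨0, hk⟩) ⟨0, hs⟩
  simp [Subsingleton.elim (R ⟨0, hk⟩) ∅] at this

theorem isPIRMatrix_submatrix_orderEmbOfFin {m : ℕ} (P : Finset (Fin n)) (hP : P.card = m)
    (hG : ∀ i : Fin s, ∃ R : Fin k → Finset (Fin n), Pairwise (Disjoint on R) ∧
      ∀ j, R j ⊆ P ∧ ∑ h ∈ R j, Gᵀ h = Pi.single i 1) :
    IsPIRMatrix s m k (G.submatrix id (P.orderEmbOfFin hP)) := by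
  intro i
  obtain ⟨R, hR, hRP⟩ := hG i
  have hinj := (P.orderEmbOfFin hP).injective
  refine ⟨fun j => (R j).preimage _ hinj.injOn, fun j j' hne => ?_, fun j => ?_⟩
  · exact disjoint_left.2 fun a ha ha' =>
      disjoint_left.1 (hR hne) (mem_preimage.1 ha) (mem_preimage.1 ha')
  · rw [← (hRP j).2]
    refine sum_preimage _ _ hinj.injOn (fun h => Gᵀ h) fun h hh hnot => absurd ?_ hnot
    rw [range_orderEmbOfFin]
    exact (hRP j).1 hh

theorem exists_recovery_sets_subset_compl {S : Finset (Fin n)} (hS : Set.InjOn Gᵀ S) (i : Fin s)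
    {R : Fin k → Finset (Fin n)} (hR : Pairwise (Disjoint on R))
    (hRsum : ∀ j, ∑ h ∈ R j, Gᵀ h = Pi.single i 1) :
    ∃ R' : Fin (k - 2 ^ (s - 1)) → Finset (Fin n), Pairwise (Disjoint on R') ∧
      ∀ m, R' m ⊆ Sᶜ ∧ ∑ h ∈ R' m, Gᵀ h = Pi.single i 1 := by
  set e : Fin s → ZMod 2 := Pi.single i 1
  have he : e ≠ 0 := fun h => by simpa [e] using congrFun h i
  obtain ⟨𝒜, h𝒜, hcard⟩ := groupingBound e univ (fun j => (R j ∩ S).image Gᵀ)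
    (by simpa using pairwiseDisjoint_image_inter hS hR)
  have hcount := cosetCount_mul_two_le he (univ.biUnion fun j => (R j ∩ S).image Gᵀ)
  have hpow : 2 ^ s = 2 ^ (s - 1) * 2 := by
    rw [← pow_succ, Nat.sub_add_cancel i.pos]
  simp only [Nat.card_eq_fintype_card, Fintype.card_pi, ZMod.card, prod_const, card_univ,
    Fintype.card_fin] at hcount hcard
  obtain ⟨A, hA, hA𝒜⟩ := exists_fin_pairwise_disjoint h𝒜.2 (k := k - 2 ^ (s - 1)) (by omega)
  refine ⟨fun m => (A m).biUnion fun j => R j \ S, fun m m' hne => ?_, fun m => ⟨?_, ?_⟩⟩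
  · refine (disjoint_biUnion_left _ _ _).2 fun j hj =>
      (disjoint_biUnion_right _ _ _).2 fun j' hj' => ?_
    have hjj' : j ≠ j' := fun h => disjoint_left.1 (hA hne) hj (h ▸ hj')
    exact (hR hjj').mono sdiff_subset sdiff_subset
  · exact biUnion_subset.2 fun j _ h hh => mem_compl.2 (mem_sdiff.1 hh).2
  · refine (sum_biUnion fun j _ j' _ hjj' => (hR hjj').mono sdiff_subset sdiff_subset).trans ?_
    rw [← (h𝒜.1 _ (hA𝒜 m)).2]
    exact sum_congr rfl fun j _ => sum_sdiff_eq_add_sum_image hS (hRsum j)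

theorem exists_injOn_transpose_card_eq
    (hall : ∀ p : Fin s → ZMod 2, p ≠ 0 → ∃ j : Fin n, (fun r : Fin s => G r j) = p) :
    ∃ S : Finset (Fin n), Set.InjOn Gᵀ S ∧ S.card = 2 ^ s - 1 := by
  obtain ⟨S, -, hS, himage⟩ := exists_subset_injOn_image_eq_of_surjOn (f := Gᵀ) Set.univ
    (univ.erase 0) fun p hp => by
      obtain ⟨j, hj⟩ := hall p (ne_of_mem_erase hp)
      exact ⟨j, trivial, hj⟩
  refine ⟨S, hS, ?_⟩
  rw [← card_image_of_injOn hS, himage, card_erase_of_mem (mem_univ _)]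
  simp

end Matrix

end PIR

open PIR

/-- If a `k`-PIR generator matrix contains every nonzero vector of `𝔽₂ˢ` at
least once as a column, then `n ≥ P(s, k - 2^{s-1}) + 2^s - 1`. -/
theorem stmt_12 (s k n : ℕ) (hs : 0 < s) (hk : 2 ^ (s - 1) < k)
    (G : Matrix (Fin s) (Fin n) (ZMod 2)) (hG : IsPIRMatrix s n k G)
    (hall : ∀ p : Fin s → ZMod 2, p ≠ 0 →
      ∃ j : Fin n, (fun r : Fin s => G r j) = p) :
    PIRlen s (k - 2 ^ (s - 1)) + (2 ^ s - 1) ≤ n := by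
  obtain ⟨S, hS, hScard⟩ := exists_injOn_transpose_card_eq G hall
  have hcard : Sᶜ.card = n - (2 ^ s - 1) := by rw [card_compl, hScard, Fintype.card_fin]
  have hPIR := isPIRMatrix_submatrix_orderEmbOfFin G Sᶜ hcard fun i => by
    obtain ⟨R, hR, hRsum⟩ := hG i
    exact exists_recovery_sets_subset_compl G hS i (fun j j' hne => hR j j' hne) hRsum
  have := PIRlen_le_of_isPIRMatrix _ hs (by omega) hPIR
  have := card_le_univ S
  simp only [Fintype.card_fin] at this
  omega
end

section
/- Let s ≥ 2, n, d, m be positive integers and let G be an s-by-n matrix over F_2 of rank s such that every nonzero F_2-linear combination of the rows of G has Hamming weight at least d. If some nonzero vector p ∈ F_2^s occurs at least m times as a column of G, then 2^{s-2}·n ≥ (2^{s-1} − 1)·d + 2^{s-2}·m (equivalently, n ≥ ((2^{s-1} − 1)/2^{s-2})·d + m). -/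
/-!
Double count the pairs `(c, j)` where `c` is a nonzero message orthogonal to `p` and the
codeword `c G` is nonzero at position `j`. There are `2^(s-1) - 1` such messages, each giving
at least `d` positions. Conversely, no such `c` is nonzero at a column equal to `p`, and at
any other column `q` at most `2^(s-2)` of them are: the condition `c ⬝ᵥ q = 1` picks out a
fibre of the homomorphism `c ↦ (c ⬝ᵥ p, c ⬝ᵥ q)`, which is no larger than its kernel, and the
two are disjoint inside the `2^(s-1)` messages orthogonal to `p`.
-/

open Finset Matrix

lemma AddMonoidHom.card_fiber_le_card_ker {V M : Type*} [AddGroup V] [Fintype V]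
    [AddMonoid M] [DecidableEq M] (f : V →+ M) (y : M) :
    #{v | f v = y} ≤ #{v | f v = 0} := by
  by_cases hy : y ∈ Set.range f
  · exact (card_fiber_eq_of_mem_range f hy ⟨0, map_zero f⟩).le
  · have : ({v | f v = y} : Finset V) = ∅ := filter_false_of_mem fun v _ hv => hy ⟨v, hv⟩
    simp [this]

@[simps]
def Matrix.dotProductAddHom {ι R : Type*} [Fintype ι] [NonUnitalNonAssocSemiring R]
    (p : ι → R) : (ι → R) →+ R where
  toFun c := c ⬝ᵥ p
  map_zero' := zero_dotProduct p
  map_add' a b := add_dotProduct a b p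

namespace ZMod

lemma ne_zero_iff_eq_one_of_two {x : ZMod 2} : x ≠ 0 ↔ x = 1 := by
  revert x; decide

variable {s : ℕ}

lemma card_dotProduct_eq_zero {p : Fin s → ZMod 2} (hp : p ≠ 0) :
    #{c : Fin s → ZMod 2 | c ⬝ᵥ p = 0} = 2 ^ (s - 1) := by
  obtain ⟨i, hi⟩ : ∃ i, p i ≠ 0 := Function.ne_iff.mp hp
  have hs : 1 ≤ s := Nat.one_le_iff_ne_zero.mpr (by rintro rfl; exact i.elim0)
  have hfiber :
      #{c : Fin s → ZMod 2 | c ⬝ᵥ p = 0} = #{c : Fin s → ZMod 2 | c ⬝ᵥ p = 1} :=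
    AddMonoidHom.card_fiber_eq_of_mem_range (dotProductAddHom p) ⟨0, zero_dotProduct p⟩
      ⟨Pi.single i 1, by simp [ne_zero_iff_eq_one_of_two.mp hi]⟩
  have hsplit := card_filter_add_card_filter_not (s := univ)
    (fun c : Fin s → ZMod 2 => c ⬝ᵥ p = 0)
  simp only [ne_zero_iff_eq_one_of_two, card_univ, Fintype.card_fun, ZMod.card,
    Fintype.card_fin] at hsplit
  rw [← hfiber, ← Nat.two_pow_pred_add_two_pow_pred hs] at hsplit
  omega

lemma card_dotProduct_eq_zero_and_ne_zero {p : Fin s → ZMod 2} (hp : p ≠ 0) :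
    #{c : Fin s → ZMod 2 | c ⬝ᵥ p = 0 ∧ c ≠ 0} = 2 ^ (s - 1) - 1 := by
  rw [← filter_filter, filter_ne', card_erase_of_mem (by simp), card_dotProduct_eq_zero hp]

lemma card_dotProduct_eq_zero_and_eq_one_le {p : Fin s → ZMod 2} (hp : p ≠ 0)
    (q : Fin s → ZMod 2) :
    #{c : Fin s → ZMod 2 | c ⬝ᵥ p = 0 ∧ c ⬝ᵥ q = 1} ≤ 2 ^ (s - 2) := by
  have hker := ((dotProductAddHom p).prod (dotProductAddHom q)).card_fiber_le_card_ker (0, 1)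
  simp only [AddMonoidHom.prod_apply, dotProductAddHom_apply, Prod.mk_eq_zero,
    Prod.mk.injEq] at hker
  have hsplit := card_filter_add_card_filter_not (s := {c : Fin s → ZMod 2 | c ⬝ᵥ p = 0})
    (fun c => c ⬝ᵥ q = 1)
  simp only [filter_filter, ← ne_zero_iff_eq_one_of_two, not_not,
    card_dotProduct_eq_zero hp] at hsplit
  simp only [ne_zero_iff_eq_one_of_two] at hsplit
  have hpow : 2 ^ (s - 1) ≤ 2 * 2 ^ (s - 2) + 1 := by
    rcases Nat.lt_or_ge s 2 with hs | hs
    · interval_cases s <;> simp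
    · rw [← pow_succ', show s - 2 + 1 = s - 1 by omega]; omega
  omega

end ZMod

open ZMod in
theorem stmt_16_general (s n d m : ℕ)
    (G : Matrix (Fin s) (Fin n) (ZMod 2))
    (hdist : ∀ c : Fin s → ZMod 2, c ≠ 0 →
      d ≤ (Finset.univ.filter fun j : Fin n => Matrix.vecMul c G j ≠ 0).card)
    (p : Fin s → ZMod 2) (hp : p ≠ 0)
    (hmult : m ≤ (Finset.univ.filter fun j : Fin n =>
      (fun r : Fin s => G r j) = p).card) :
    (2 ^ (s - 1) - 1) * d + 2 ^ (s - 2) * m ≤ 2 ^ (s - 2) * n := by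
  set S : Finset (Fin s → ZMod 2) := {c | c ⬝ᵥ p = 0 ∧ c ≠ 0}
  set P : Finset (Fin n) := {j | (fun r => G r j) = p}
  let r : (Fin s → ZMod 2) → Fin n → Prop := fun c j => c ⬝ᵥ Gᵀ j ≠ 0
  have hlow : #S * d ≤ ∑ c ∈ S, #(univ.bipartiteAbove r c) :=
    card_nsmul_le_sum _ _ _ fun c hc => hdist c (mem_filter.mp hc).2.2
  have hcol : ∀ j, #(S.bipartiteBelow r j) ≤ if j ∈ Pᶜ then 2 ^ (s - 2) else 0 := by
    intro j
    split_ifs with hj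
    · refine (card_le_card fun c hc => ?_).trans
        (card_dotProduct_eq_zero_and_eq_one_le hp (Gᵀ j))
      simp only [bipartiteBelow, S, r, mem_filter, mem_univ, true_and] at hc ⊢
      exact ⟨hc.1.1, ne_zero_iff_eq_one_of_two.mp hc.2⟩
    · rw [Nat.le_zero, card_eq_zero, bipartiteBelow, filter_eq_empty_iff]
      intro c hc
      simp only [S, mem_filter, mem_univ, true_and] at hc
      simp only [P, mem_compl, mem_filter, mem_univ, true_and, not_not] at hj
      simp only [r, not_not]
      exact (congrArg _ hj).trans hc.1
  have hup : ∑ j, #(S.bipartiteBelow r j) ≤ #Pᶜ * 2 ^ (s - 2) := by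
    grw [sum_le_sum fun j _ => hcol j, sum_ite_mem, univ_inter, sum_const, smul_eq_mul]
  rw [sum_card_bipartiteAbove_eq_sum_card_bipartiteBelow,
    card_dotProduct_eq_zero_and_ne_zero hp] at hlow
  calc (2 ^ (s - 1) - 1) * d + 2 ^ (s - 2) * m ≤ #Pᶜ * 2 ^ (s - 2) + 2 ^ (s - 2) * #P :=
        add_le_add (hlow.trans hup) (Nat.mul_le_mul_left _ hmult)
    _ = 2 ^ (s - 2) * (#P + #Pᶜ) := by ring
    _ = 2 ^ (s - 2) * n := by rw [card_add_card_compl, Fintype.card_fin]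

/-- If an `[n,s]` code of minimum distance at least `d` has a column of
multiplicity at least `m`, then `2^{s-2}·n ≥ (2^{s-1} - 1)·d + 2^{s-2}·m`. -/
theorem stmt_16 (s n d m : ℕ) (hs : 2 ≤ s) (hn : 0 < n) (hd : 0 < d) (hm : 0 < m)
    (G : Matrix (Fin s) (Fin n) (ZMod 2)) (hrank : G.rank = s)
    (hdist : ∀ c : Fin s → ZMod 2, c ≠ 0 →
      d ≤ (Finset.univ.filter fun j : Fin n => Matrix.vecMul c G j ≠ 0).card)
    (p : Fin s → ZMod 2) (hp : p ≠ 0)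
    (hmult : m ≤ (Finset.univ.filter fun j : Fin n =>
      (fun r : Fin s => G r j) = p).card) :
    (2 ^ (s - 1) - 1) * d + 2 ^ (s - 2) * m ≤ 2 ^ (s - 2) * n :=
  stmt_16_general s n d m G hdist p hp hmult
end
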